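/- arXiv:2008.08288 — 9 statements merged into one kernel-verified Lean document; each statement's English description precedes it below -/
import Mathlib

section
/- Let G=(V,E) be a finite simple graph with a vertex cover C of size τ, let h ∈ ℕ, let U ⊆ C, and let V_U = {x ∈ V∖C : N(x)=U} be the set of vertices of type U. If v ∈ V_U and |V_U| ≥ 2·h^τ + 2, then G admits an h-queue layout if and only if G' = G − {v} admits an h-queue layout. Moreover, every h-queue layout of G' can be extended to an h-queue layout of G in which the relative order of the vertices of G' is unchanged. -/
/-- An `h`-queue layout of a simple graph `G`: a linear order of the vertices
(given by an injection `f` into `ℕ`) together with an assignment `σ` of edges to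
queues `1, …, h` such that no two edges assigned to the same queue nest. -/
def IsQueueLayout {V : Type*} (G : SimpleGraph V) (h : ℕ)
    (f : V → ℕ) (σ : Sym2 V → Fin h) : Prop :=
  Function.Injective f ∧
    ∀ u v w x : V, G.Adj u v → G.Adj w x → σ s(u, v) = σ s(w, x) →
      ¬ (f u < f w ∧ f w < f x ∧ f x < f v)

/-- `G` admits an `h`-queue layout. -/
def HasQueueLayout {V : Type*} (G : SimpleGraph V) (h : ℕ) : Prop :=
  ∃ (f : V → ℕ) (σ : Sym2 V → Fin h), IsQueueLayout G h f σ
/-! Pigeonholing the at least `2·h^τ + 1` type-`U` vertices other than `v` by the queues of their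
edges to `U` (at most `h^τ` patterns) gives three of them, `w₁ ≺ w₂ ≺ w₃`, with the same pattern.
Insert `v` immediately after `w₂` and put each edge `vu` in the queue of `w₂u`. A nesting that does
not involve both `v` and `w₂` becomes a nesting of `G - v` when `v` is replaced by `w₂`; the only
other nestings are `w₂b` over `vd`, refuted by `w₁b` over `w₂d`, and `av` over `cw₂`, refuted by
`aw₃` over `cw₂`. -/

open Finset Function

theorem Finset.exists_lt_lt_of_two_lt_card {γ : Type*} [LinearOrder γ] {s : Finset γ}
    (hs : 2 < #s) : ∃ x ∈ s, ∃ y ∈ s, ∃ z ∈ s, x < y ∧ y < z := by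
  let e := s.orderEmbOfFin rfl
  exact ⟨e ⟨0, by omega⟩, s.orderEmbOfFin_mem rfl _, e ⟨1, by omega⟩, s.orderEmbOfFin_mem rfl _,
    e ⟨2, hs⟩, s.orderEmbOfFin_mem rfl _, e.strictMono (by simp), e.strictMono (by simp)⟩

theorem Finset.exists_lt_lt_of_two_mul_card_lt {α β γ : Type*} [Fintype β] [LinearOrder γ]
    {s : Finset α} (c : α → β) {f : α → γ} (hf : Injective f)
    (hs : 2 * Fintype.card β < #s) :
    ∃ x ∈ s, ∃ y ∈ s, ∃ z ∈ s, c x = c y ∧ c z = c y ∧ f x < f y ∧ f y < f z := by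
  classical
  obtain ⟨b, -, hb⟩ := exists_lt_card_fiber_of_mul_lt_card_of_maps_to (f := c) (t := univ)
    (fun _ _ => mem_univ _) (by rwa [card_univ, mul_comm])
  obtain ⟨_, hfx, _, hfy, _, hfz, hxy, hyz⟩ := exists_lt_lt_of_two_lt_card
    (by rwa [card_image_of_injective _ hf] : 2 < #({x ∈ s | c x = b}.image f))
  obtain ⟨x, hx, rfl⟩ := mem_image.1 hfx
  obtain ⟨y, hy, rfl⟩ := mem_image.1 hfy
  obtain ⟨z, hz, rfl⟩ := mem_image.1 hfz
  rw [mem_filter] at hx hy hz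
  exact ⟨x, hx.1, y, hy.1, z, hz.1, hx.2.trans hy.2.symm, hz.2.trans hy.2.symm, hxy, hyz⟩

theorem IsQueueLayout.comap {V W : Type*} {G : SimpleGraph V} {H : SimpleGraph W} {h : ℕ}
    {f : V → ℕ} {σ : Sym2 V → Fin h} (hL : IsQueueLayout G h f σ) (φ : H ↪g G) :
    IsQueueLayout H h (f ∘ φ) (σ ∘ Sym2.map φ) :=
  ⟨hL.1.comp φ.injective, fun u v w x huv hwx hσ =>
    hL.2 _ _ _ _ (φ.map_adj_iff.2 huv) (φ.map_adj_iff.2 hwx) (by simpa using hσ)⟩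

section TwinInsertion

variable {V : Type*} [DecidableEq V] {G : SimpleGraph V} {h : ℕ} {v : V}

def collapseTo (w : {u : V // u ≠ v}) (x : V) : {u : V // u ≠ v} :=
  if hx : x = v then w else ⟨x, hx⟩

@[simp]
theorem collapseTo_self (w : {u : V // u ≠ v}) : collapseTo w v = w :=
  dif_pos rfl

@[simp]
theorem collapseTo_val (w a : {u : V // u ≠ v}) : collapseTo w a.1 = a :=
  dif_neg a.2

theorem adj_collapseTo {w : {u : V // u ≠ v}} (hw : ∀ u, G.Adj w u ↔ G.Adj v u) {x y : V}
    (hxy : G.Adj x y) : (G.induce {u | u ≠ v}).Adj (collapseTo w x) (collapseTo w y) := by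
  obtain rfl | hx := eq_or_ne v x
  · lift y to {u // u ≠ v} using hxy.ne.symm
    simpa using (hw y).2 hxy
  obtain rfl | hy := eq_or_ne v y
  · lift x to {u // u ≠ v} using hx.symm
    simpa using ((hw x).2 hxy.symm).symm
  lift x to {u // u ≠ v} using hx.symm
  lift y to {u // u ≠ v} using hy.symm
  simpa using hxy

def insertAfter (f' : {u : V // u ≠ v} → ℕ) (w : {u : V // u ≠ v}) (x : V) : ℕ :=
  2 * f' (collapseTo w x) + if x = v then 1 else 0

variable {f' : {u : V // u ≠ v} → ℕ} {w : {u : V // u ≠ v}}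

@[simp]
theorem insertAfter_self : insertAfter f' w v = 2 * f' w + 1 := by
  simp [insertAfter]

@[simp]
theorem insertAfter_val (a : {u : V // u ≠ v}) : insertAfter f' w a.1 = 2 * f' a := by
  simp [insertAfter, a.2]

theorem lt_or_eq_of_insertAfter_lt (hf' : Injective f') {x y : V}
    (hxy : insertAfter f' w x < insertAfter f' w y) :
    f' (collapseTo w x) < f' (collapseTo w y) ∨ (x = w ∧ y = v) := by
  obtain rfl | hx := eq_or_ne v x
  · obtain rfl | hy := eq_or_ne v y
    · exact absurd hxy (lt_irrefl _)
    lift y to {u // u ≠ v} using hy.symm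
    simp only [insertAfter_self, insertAfter_val] at hxy
    simp only [collapseTo_self, collapseTo_val]
    omega
  lift x to {u // u ≠ v} using hx.symm
  obtain rfl | hy := eq_or_ne v y
  · simp only [insertAfter_self, insertAfter_val] at hxy
    obtain hlt | heq := (Nat.lt_succ_iff.1 (by omega : f' x < f' w + 1)).lt_or_eq
    · exact .inl (by simpa using hlt)
    · simp [hf' heq]
  lift y to {u // u ≠ v} using hy.symm
  simp only [insertAfter_val] at hxy
  simp only [collapseTo_val]
  omega

theorem insertAfter_injective (hf' : Injective f') : Injective (insertAfter f' w) := by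
  intro x y hxy
  obtain rfl | hx := eq_or_ne v x <;> obtain rfl | hy := eq_or_ne v y
  · rfl
  · lift y to {u // u ≠ v} using hy.symm
    simp only [insertAfter_self, insertAfter_val] at hxy
    omega
  · lift x to {u // u ≠ v} using hx.symm
    simp only [insertAfter_self, insertAfter_val] at hxy
    omega
  · lift x to {u // u ≠ v} using hx.symm
    lift y to {u // u ≠ v} using hy.symm
    simp only [insertAfter_val, mul_right_inj' two_ne_zero] at hxy
    rw [hf' hxy]

theorem isQueueLayout_insertAfter {σ' : Sym2 {u : V // u ≠ v} → Fin h}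
    (hL : IsQueueLayout (G.induce {u | u ≠ v}) h f' σ') {w₁ w₂ w₃ : {u : V // u ≠ v}}
    (h₁₂ : f' w₁ < f' w₂) (h₂₃ : f' w₂ < f' w₃) (hw₂ : ∀ u, G.Adj w₂ u ↔ G.Adj v u)
    (hw₁ : ∀ u : {u : V // u ≠ v}, G.Adj v u → G.Adj w₁ u ∧ σ' s(w₁, u) = σ' s(w₂, u))
    (hw₃ : ∀ u : {u : V // u ≠ v}, G.Adj v u → G.Adj w₃ u ∧ σ' s(w₃, u) = σ' s(w₂, u)) :
    IsQueueLayout G h (insertAfter f' w₂) (σ' ∘ Sym2.map (collapseTo w₂)) := by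
  obtain ⟨hinj, hnest⟩ := hL
  replace hnest : ∀ a b c d : {u : V // u ≠ v}, G.Adj a b → G.Adj c d →
      σ' s(a, b) = σ' s(c, d) → ¬(f' a < f' c ∧ f' c < f' d ∧ f' d < f' b) := hnest
  refine ⟨insertAfter_injective hinj, ?_⟩
  rintro a b c d hab hcd hσ ⟨hac, hcd', hdb⟩
  simp only [comp_apply, Sym2.map_mk] at hσ
  have hadj {x y : V} (hxy : G.Adj x y) : G.Adj (collapseTo w₂ x) (collapseTo w₂ y) :=
    adj_collapseTo hw₂ hxy
  rcases lt_or_eq_of_insertAfter_lt hinj hac with hac | ⟨rfl, hc⟩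
  · rcases lt_or_eq_of_insertAfter_lt hinj hdb with hdb | ⟨rfl, hb⟩
    · rcases lt_or_eq_of_insertAfter_lt hinj hcd' with hcd' | ⟨rfl, hd⟩
      · exact hnest _ _ _ _ (hadj hab) (hadj hcd) hσ ⟨hac, hcd', hdb⟩
      · subst d
        exact G.irrefl ((hw₂ v).1 hcd)
    · subst b
      set a' := collapseTo w₂ a
      obtain hc' | ⟨-, hw₂v⟩ := lt_or_eq_of_insertAfter_lt hinj hcd'
      · obtain ⟨ha'w₃, hσ₃⟩ := hw₃ a' ((hw₂ a').1 (by simpa using (hadj hab).symm))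
        refine hnest a' w₃ (collapseTo w₂ c) w₂ ha'w₃.symm (by simpa using hadj hcd) ?_
          ⟨hac, by simpa using hc', h₂₃⟩
        rw [Sym2.eq_swap, hσ₃, Sym2.eq_swap]
        simpa using hσ
      · exact w₂.2 hw₂v
  · subst c
    set b' := collapseTo w₂ b
    set d' := collapseTo w₂ d
    obtain hd' | ⟨hw₂v, -⟩ := lt_or_eq_of_insertAfter_lt hinj hcd'
    · obtain hd'b' | ⟨rfl, -⟩ := lt_or_eq_of_insertAfter_lt hinj hdb
      · obtain ⟨hw₁b', hσ₁⟩ := hw₁ b' ((hw₂ b').1 (by simpa using hadj hab))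
        refine hnest w₁ b' w₂ d' hw₁b' (by simpa using hadj hcd) ?_
          ⟨h₁₂, by simpa using hd', hd'b'⟩
        exact hσ₁.trans (by simpa using hσ)
      · exact absurd (hac.trans hcd') (lt_irrefl _)
    · exact w₂.2 hw₂v.symm

theorem IsQueueLayout.exists_extension_of_twins [Fintype V] [DecidableRel G.Adj]
    {σ' : Sym2 {u : V // u ≠ v} → Fin h} (hL : IsQueueLayout (G.induce {u | u ≠ v}) h f' σ')
    (htwins : 2 * h ^ G.degree v + 2 ≤ #{x | G.neighborFinset x = G.neighborFinset v}) :
    ∃ (f : V → ℕ) (σ : Sym2 V → Fin h), IsQueueLayout G h f σ ∧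
      ∀ a b : {u : V // u ≠ v}, f' a < f' b ↔ f a.1 < f b.1 := by
  set S : Finset V := {x | G.neighborFinset x = G.neighborFinset v}
  let queues (x : {u : V // u ≠ v}) (u : G.neighborSet v) : Fin h :=
    σ' s(x, ⟨u, (G.ne_of_adj u.2).symm⟩)
  have hcard : 2 * Fintype.card (G.neighborSet v → Fin h) < #(S.subtype (· ≠ v)) := by
    rw [Fintype.card_fun, G.card_neighborSet_eq_degree, Fintype.card_fin, card_subtype,
      filter_ne', card_erase_of_mem (by simp [S])]
    omega
  obtain ⟨w₁, hw₁, w₂, hw₂, w₃, hw₃, hq₁, hq₃, h₁₂, h₂₃⟩ :=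
    exists_lt_lt_of_two_mul_card_lt queues hL.1 hcard
  have twin {w : {u : V // u ≠ v}} (hw : w ∈ S.subtype (· ≠ v)) :
      ∀ u, G.Adj w u ↔ G.Adj v u := by
    simpa [S, Finset.ext_iff] using hw
  refine ⟨insertAfter f' w₂, _, isQueueLayout_insertAfter hL h₁₂ h₂₃ (twin hw₂)
    (fun u hu => ⟨(twin hw₁ u).2 hu, congrFun hq₁ ⟨u, hu⟩⟩)
    (fun u hu => ⟨(twin hw₃ u).2 hu, congrFun hq₃ ⟨u, hu⟩⟩), fun a b => by simp⟩

end TwinInsertion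

theorem kernel_delete_type_vertex_general {V : Type*} [Fintype V] [DecidableEq V]
    (G : SimpleGraph V) [DecidableRel G.Adj]
    (C : Finset V) (τ h : ℕ)
    (hcard : C.card = τ)
    (U : Finset V) (hU : U ⊆ C)
    (v : V) (hvN : G.neighborFinset v = U)
    (hbig : 2 * h ^ τ + 2 ≤
      (Finset.univ.filter (fun x : V => x ∉ C ∧ G.neighborFinset x = U)).card) :
    (HasQueueLayout G h ↔ HasQueueLayout (G.induce {u : V | u ≠ v}) h) ∧
    (∀ (f' : {u : V // u ≠ v} → ℕ) (σ' : Sym2 {u : V // u ≠ v} → Fin h),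
      IsQueueLayout (G.induce {u : V | u ≠ v}) h f' σ' →
      ∃ (f : V → ℕ) (σ : Sym2 V → Fin h), IsQueueLayout G h f σ ∧
        ∀ a b : {u : V // u ≠ v}, f' a < f' b ↔ f a.val < f b.val) := by
  have hdeg : G.degree v ≤ τ := by
    rw [← G.card_neighborFinset_eq_degree, hvN, ← hcard]
    exact card_le_card hU
  have hext (f' : {u : V // u ≠ v} → ℕ) (σ' : Sym2 {u : V // u ≠ v} → Fin h)
      (hL : IsQueueLayout (G.induce {u : V | u ≠ v}) h f' σ') :
      ∃ (f : V → ℕ) (σ : Sym2 V → Fin h), IsQueueLayout G h f σ ∧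
        ∀ a b : {u : V // u ≠ v}, f' a < f' b ↔ f a.val < f b.val := by
    obtain ⟨u, hu⟩ := Fintype.exists_ne_of_one_lt_card
      (hbig.trans_lt' (by omega) |>.trans_le (card_le_univ _)) v
    have hh : 0 < h := (σ' s(⟨u, hu⟩, ⟨u, hu⟩)).pos
    refine hL.exists_extension_of_twins (le_trans ?_ (hbig.trans (card_le_card ?_)))
    · gcongr
    · intro x
      simp only [mem_filter, mem_univ, true_and, hvN]
      exact And.right
  refine ⟨⟨fun ⟨f, σ, hL⟩ => ⟨_, _, hL.comap (SimpleGraph.Embedding.induce _)⟩,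
    fun ⟨f', σ', hL⟩ => ?_⟩, hext⟩
  obtain ⟨f, σ, hL, -⟩ := hext f' σ' hL
  exact ⟨f, σ, hL⟩

/-- Kernelization lemma: if `C` is a vertex cover of size `τ`, `U ⊆ C`, and `v` is a
vertex of type `U` (i.e. `v ∉ C` and `N(v) = U`) such that the number of vertices of
type `U` is at least `2·h^τ + 2`, then `G` admits an `h`-queue layout iff `G − v` does;
moreover every `h`-queue layout of `G − v` extends to one of `G` preserving the
relative order of the vertices of `G − v`. -/
theorem kernel_delete_type_vertex {V : Type*} [Fintype V] [DecidableEq V]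
    (G : SimpleGraph V) [DecidableRel G.Adj]
    (C : Finset V) (τ h : ℕ)
    (hcover : ∀ u w : V, G.Adj u w → u ∈ C ∨ w ∈ C)
    (hcard : C.card = τ)
    (U : Finset V) (hU : U ⊆ C)
    (v : V) (hvC : v ∉ C) (hvN : G.neighborFinset v = U)
    (hbig : 2 * h ^ τ + 2 ≤
      (Finset.univ.filter (fun x : V => x ∉ C ∧ G.neighborFinset x = U)).card) :
    (HasQueueLayout G h ↔ HasQueueLayout (G.induce {u : V | u ≠ v}) h) ∧
    (∀ (f' : {u : V // u ≠ v} → ℕ) (σ' : Sym2 {u : V // u ≠ v} → Fin h),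
      IsQueueLayout (G.induce {u : V | u ≠ v}) h f' σ' →
      ∃ (f : V → ℕ) (σ : Sym2 V → Fin h), IsQueueLayout G h f σ ∧
        ∀ a b : {u : V // u ≠ v}, f' a < f' b ↔ f a.val < f b.val) :=
  kernel_delete_type_vertex_general G C τ h hcard U hU v hvN hbig
end

section
/- The complete bipartite graph K_{3,3} does not admit a 1-queue layout: for every linear order of the six vertices of K_{3,3}, there exist two independent edges that nest. -/
/-!
Let `l` and `r` be the leftmost and rightmost vertices. If they lie in different parts, the
edge `lr` spans the whole layout and every edge avoiding `l` and `r` nests inside it. If they lie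
in the same part, take a third vertex `m` of that part and two vertices `b₁ ≺ b₂` of the other:
`m b₂` nests inside `b₁ r` when `b₁ ≺ m`, and `m b₁` nests inside `l b₂` when `m ≺ b₁`.
-/

open Function Sum

theorem Fintype.exists_ne_ne_of_two_lt_card {α : Type*} [Fintype α] (h : 2 < Fintype.card α)
    (a a' : α) : ∃ k, k ≠ a ∧ k ≠ a' := by
  classical
  obtain ⟨k, -, hk⟩ := Finset.exists_mem_notMem_of_card_lt_card
    (s := {a, a'}) (t := Finset.univ) (Finset.card_le_two.trans_lt h)
  exact ⟨k, by simpa [not_or] using hk⟩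

namespace SimpleGraph

variable {V γ : Type*} [LinearOrder γ]

/-- The strict inequalities force the four endpoints to be distinct, so the edges are
independent. -/
def HasNestedEdges (G : SimpleGraph V) (f : V → γ) : Prop :=
  ∃ u v w x, G.Adj u v ∧ G.Adj w x ∧ f u < f w ∧ f w < f x ∧ f x < f v

variable {G : SimpleGraph V} {f : V → γ} {l r : V}

theorem hasNestedEdges_of_mem_Ioo {u v w x : V} (huv : G.Adj u v) (hwx : G.Adj w x)
    (hne : f w ≠ f x) (hw : f w ∈ Set.Ioo (f u) (f v)) (hx : f x ∈ Set.Ioo (f u) (f v)) :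
    G.HasNestedEdges f := by
  rcases hne.lt_or_gt with h | h
  · exact ⟨u, v, w, x, huv, hwx, hw.1, h, hx.2⟩
  · exact ⟨u, v, x, w, huv, hwx.symm, hx.1, h, hw.2⟩

theorem hasNestedEdges_of_adj_extremes (hf : Injective f) (hl : ∀ v, f l ≤ f v)
    (hr : ∀ v, f v ≤ f r) (hlr : G.Adj l r) {w x : V} (hwx : G.Adj w x)
    (hwl : w ≠ l) (hwr : w ≠ r) (hxl : x ≠ l) (hxr : x ≠ r) : G.HasNestedEdges f :=
  hasNestedEdges_of_mem_Ioo hlr hwx (hf.ne hwx.ne)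
    ⟨(hl w).lt_of_ne (hf.ne hwl.symm), (hr w).lt_of_ne (hf.ne hwr)⟩
    ⟨(hl x).lt_of_ne (hf.ne hxl.symm), (hr x).lt_of_ne (hf.ne hxr)⟩

theorem hasNestedEdges_of_extremes_of_commonNeighbors (hf : Injective f) (hl : ∀ v, f l ≤ f v)
    (hr : ∀ v, f v ≤ f r) {m b₁ b₂ : V} (hml : m ≠ l) (hmr : m ≠ r)
    (hb : b₁ ≠ b₂) (hb₁ : G.Adj l b₁ ∧ G.Adj m b₁ ∧ G.Adj r b₁)
    (hb₂ : G.Adj l b₂ ∧ G.Adj m b₂ ∧ G.Adj r b₂) : G.HasNestedEdges f := by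
  wlog hlt : f b₁ < f b₂ generalizing b₁ b₂
  · exact this hb.symm hb₂ hb₁ ((hf.ne hb).lt_or_gt.resolve_left hlt)
  obtain ⟨hlb₁, hmb₁, hrb₁⟩ := hb₁
  obtain ⟨hlb₂, hmb₂, hrb₂⟩ := hb₂
  have hl_lt_m : f l < f m := (hl m).lt_of_ne (hf.ne hml.symm)
  have hm_lt_r : f m < f r := (hr m).lt_of_ne (hf.ne hmr)
  rcases (hf.ne hmb₁.ne).lt_or_gt with hmb | hbm
  · exact hasNestedEdges_of_mem_Ioo hlb₂ hmb₁ (hf.ne hmb₁.ne) ⟨hl_lt_m, hmb.trans hlt⟩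
      ⟨(hl b₁).lt_of_ne (hf.ne hlb₁.ne), hlt⟩
  · exact hasNestedEdges_of_mem_Ioo hrb₁.symm hmb₂ (hf.ne hmb₂.ne) ⟨hbm, hm_lt_r⟩
      ⟨hlt, (hr b₂).lt_of_ne (hf.ne hrb₂.ne.symm)⟩

theorem completeBipartiteGraph_hasNestedEdges {α β : Type*} [Fintype α] [Fintype β]
    (hα : 2 < Fintype.card α) (hβ : 2 < Fintype.card β) {f : α ⊕ β → γ}
    (hf : Injective f) : (completeBipartiteGraph α β).HasNestedEdges f := by
  obtain ⟨a₁, a₂, -, ha, -, -⟩ := Fintype.two_lt_card_iff.mp hα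
  obtain ⟨b₁, b₂, -, hb, -, -⟩ := Fintype.two_lt_card_iff.mp hβ
  have : Nonempty (α ⊕ β) := ⟨inl a₁⟩
  obtain ⟨l, hl⟩ := Finite.exists_min f
  obtain ⟨r, hr⟩ := Finite.exists_max f
  rcases l with a | b <;> rcases r with a' | b'
  · obtain ⟨m, hma, hma'⟩ := Fintype.exists_ne_ne_of_two_lt_card hα a a'
    exact hasNestedEdges_of_extremes_of_commonNeighbors (m := inl m) (b₁ := inr b₁) (b₂ := inr b₂)
      hf hl hr (by simpa) (by simpa) (by simpa) (by simp) (by simp)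
  · obtain ⟨a'', ha'', -⟩ := Fintype.exists_ne_ne_of_two_lt_card hα a a
    obtain ⟨b'', hb'', -⟩ := Fintype.exists_ne_ne_of_two_lt_card hβ b' b'
    exact hasNestedEdges_of_adj_extremes (w := inl a'') (x := inr b'') hf hl hr (by simp) (by simp)
      (by simpa) (by simp) (by simp) (by simpa)
  · obtain ⟨a'', ha'', -⟩ := Fintype.exists_ne_ne_of_two_lt_card hα a' a'
    obtain ⟨b'', hb'', -⟩ := Fintype.exists_ne_ne_of_two_lt_card hβ b b
    exact hasNestedEdges_of_adj_extremes (w := inl a'') (x := inr b'') hf hl hr (by simp) (by simp)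
      (by simp) (by simpa) (by simpa) (by simp)
  · obtain ⟨m, hmb, hmb'⟩ := Fintype.exists_ne_ne_of_two_lt_card hβ b b'
    exact hasNestedEdges_of_extremes_of_commonNeighbors (m := inr m) (b₁ := inl a₁) (b₂ := inl a₂)
      hf hl hr (by simpa) (by simpa) (by simpa) (by simp) (by simp)

end SimpleGraph

/-- `K_{3,3}` does not admit a 1-queue layout: for every linear order of its six
vertices (given by an injection `f` into `ℕ`) there are two independent edges that
nest. -/
theorem K33_no_one_queue_layout (f : Fin 3 ⊕ Fin 3 → ℕ)
    (hf : Function.Injective f) :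
    ∃ u v w x : Fin 3 ⊕ Fin 3,
      (completeBipartiteGraph (Fin 3) (Fin 3)).Adj u v ∧
      (completeBipartiteGraph (Fin 3) (Fin 3)).Adj w x ∧
      f u < f w ∧ f w < f x ∧ f x < f v :=
  SimpleGraph.completeBipartiteGraph_hasNestedEdges (by simp) (by simp) hf
end

section
/- Let ≺ be a linear order on a set containing five distinct elements u_1, u_2, u_3, w, z with u_1 ≺ u_2 ≺ u_3 and w ≺ z. Consider the six edges u_i w and u_i z for i=1,2,3, and suppose that no two of these six edges that have four distinct endpoints nest with respect to ≺ (i.e., they could all be placed in a single queue). Then w ≺ u_1 ≺ u_2 ≺ u_3 ≺ z. -/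
/-- Let `u₁ ≺ u₂ ≺ u₃` and `w ≺ z` be five distinct elements of a linear order, and
consider the six edges `uᵢw`, `uᵢz` (`i = 1,2,3`). If no two of these edges having
four distinct endpoints nest (an edge `{p₁,p₂}` nests `{q₁,q₂}` when
`min p₁ p₂ ≺ min q₁ q₂` and `max q₁ q₂ ≺ max p₁ p₂`), then
`w ≺ u₁ ≺ u₂ ≺ u₃ ≺ z`. -/
theorem one_queue_star_edges_order {α : Type*} [LinearOrder α]
    (u₁ u₂ u₃ w z : α)
    (h12 : u₁ < u₂) (h23 : u₂ < u₃) (hwz : w < z)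
    (hdist : [u₁, u₂, u₃, w, z].Pairwise (· ≠ ·))
    (hnonest : ∀ p q : α × α,
      p ∈ ({(u₁, w), (u₂, w), (u₃, w), (u₁, z), (u₂, z), (u₃, z)} : Set (α × α)) →
      q ∈ ({(u₁, w), (u₂, w), (u₃, w), (u₁, z), (u₂, z), (u₃, z)} : Set (α × α)) →
      p.1 ≠ q.1 → p.1 ≠ q.2 → p.2 ≠ q.1 → p.2 ≠ q.2 →
      ¬ (min p.1 p.2 < min q.1 q.2 ∧ max q.1 q.2 < max p.1 p.2)) :
    w < u₁ ∧ u₁ < u₂ ∧ u₂ < u₃ ∧ u₃ < z := by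
  simp only [List.pairwise_cons, List.mem_cons, List.mem_singleton, List.not_mem_nil,
    List.Pairwise.nil] at hdist
  obtain ⟨h1, h2, h3, -⟩ := hdist
  have h1w : u₁ ≠ w := h1 w (by simp)
  have h1z : u₁ ≠ z := h1 z (by simp)
  have h2w : u₂ ≠ w := h2 w (by simp)
  have h2z : u₂ ≠ z := h2 z (by simp)
  have h3w : u₃ ≠ w := h3 w (by simp)
  have h3z : u₃ ≠ z := h3 z (by simp)
  have hw1 : w < u₁ := by
    by_contra hc
    have h1w' : u₁ < w := lt_of_le_of_ne (not_lt.mp hc) h1w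
    rcases h2z.lt_or_gt with h2z' | h2z'
    · -- u₂ < z : edge (u₁,z) nests (u₂,w)
      refine hnonest (u₁, z) (u₂, w) (by simp) (by simp) h12.ne h1w h2z.symm hwz.ne' ?_
      constructor
      · exact lt_of_le_of_lt (min_le_left _ _) (lt_min h12 h1w')
      · exact lt_of_lt_of_le (max_lt h2z' hwz) (le_max_right _ _)
    · -- z < u₂ : edge (u₃,w) nests (u₂,z)
      refine hnonest (u₃, w) (u₂, z) (by simp) (by simp) h23.ne' h3z h2w.symm hwz.ne ?_
      constructor
      · exact lt_of_le_of_lt (min_le_right _ _) (lt_min (hwz.trans h2z') hwz)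
      · exact lt_of_lt_of_le (max_lt h23 (h2z'.trans h23)) (le_max_left _ _)
  have hz3 : u₃ < z := by
    by_contra hc
    have h3z' : z < u₃ := lt_of_le_of_ne (not_lt.mp hc) h3z.symm
    rcases h2w.lt_or_gt with h2w' | h2w'
    · -- u₂ < w : edge (u₁,z) nests (u₂,w)
      refine hnonest (u₁, z) (u₂, w) (by simp) (by simp) h12.ne h1w h2z.symm hwz.ne' ?_
      constructor
      · exact lt_of_le_of_lt (min_le_left _ _) (lt_min h12 (h12.trans h2w'))
      · exact lt_of_lt_of_le (max_lt (h2w'.trans hwz) hwz) (le_max_right _ _)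
    · -- w < u₂ : edge (u₃,w) nests (u₂,z)
      refine hnonest (u₃, w) (u₂, z) (by simp) (by simp) h23.ne' h3z h2w.symm hwz.ne ?_
      constructor
      · exact lt_of_le_of_lt (min_le_right _ _) (lt_min h2w' hwz)
      · exact lt_of_lt_of_le (max_lt h23 h3z') (le_max_left _ _)
  exact ⟨hw1, h12, h23, hz3⟩
end

section
/- Let G=(V,E) be a finite simple graph and let ≺ be a linear order on V such that no two independent edges of G nest. Let ab be an edge of G with a ≺ b, and let P be a path in G from a vertex u with u ≺ a to a vertex w with b ≺ w. Then P contains a vertex z with a ⪯ z ⪯ b. -/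
/-- Let `≺` be a linear order on the vertices of `G` in which no two edges nest
(a 1-queue layout). If `ab` is an edge with `a ≺ b` and `P` is a path from a vertex
`u ≺ a` to a vertex `w ≻ b`, then `P` contains a vertex `z` with `a ⪯ z ⪯ b`. -/
theorem path_meets_interval {V : Type*} [Fintype V] [LinearOrder V]
    (G : SimpleGraph V)
    (hnonest : ∀ u v w x : V, G.Adj u v → G.Adj w x →
      ¬ (u < w ∧ w < x ∧ x < v))
    (a b : V) (hab : G.Adj a b) (haltb : a < b)
    (u w : V) (hu : u < a) (hw : b < w)
    (p : G.Walk u w) (hp : p.IsPath) :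
    ∃ z ∈ p.support, a ≤ z ∧ z ≤ b := by
  clear hp
  induction p with
  | nil => exact absurd (hw.trans (hu.trans haltb)) (lt_irrefl b)
  | @cons u v w h q ih =>
    rcases lt_or_ge v a with hva | hav
    · obtain ⟨z, hz, hz2⟩ := ih hva hw
      exact ⟨z, by simp [hz], hz2⟩
    · rcases le_or_gt v b with hvb | hbv
      · exact ⟨v, by simp, hav, hvb⟩
      · exact absurd ⟨hu, haltb, hbv⟩ (hnonest u v a b h hab)
end

section
/- Let G=(V,E) be a finite simple graph and let ≺ be a linear order on V such that no two independent edges of G nest. Let a_1b_1, …, a_mb_m be edges of G whose intervals are pairwise disjoint and ordered left to right, i.e., a_i ≺ b_i for all i and b_i ≺ a_{i+1} for all i < m. Then every path in G from a vertex u with u ≺ a_1 to a vertex w with b_m ≺ w contains, for each i ∈ {1,…,m}, a vertex z_i with a_i ⪯ z_i ⪯ b_i; in particular such a path has length at least m+1. -/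
lemma walk_cross {V : Type*} [LinearOrder V] {G : SimpleGraph V} {A B : V}
    (hAB : A ≤ B)
    (hedge : ∀ x y : V, G.Adj x y → ¬ (x < A ∧ B < y)) :
    ∀ {u w : V} (p : G.Walk u w), u < A → B < w →
      ∃ z ∈ p.support, A ≤ z ∧ z ≤ B := by
  intro u w p
  induction p with
  | nil => intro h1 h2; exact absurd (h1.trans_le hAB) (not_lt.2 h2.le)
  | @cons u v w h q ih =>
    intro h1 h2
    rcases lt_or_ge v A with hv | hv
    · obtain ⟨z, hz, hz2⟩ := ih hv h2
      exact ⟨z, by simp [hz], hz2⟩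
    · rcases le_or_gt v B with hv2 | hv2
      · exact ⟨v, by simp, hv, hv2⟩
      · exact absurd ⟨h1, hv2⟩ (hedge u v h)

/-- Let `≺` be a linear order on the vertices of `G` in which no two edges nest
(a 1-queue layout), and let `a₁b₁, …, aₘbₘ` be edges whose intervals are pairwise
disjoint and ordered left to right (`aᵢ ≺ bᵢ` and `bᵢ ≺ a_{i+1}`). Then every path
from a vertex `u ≺ a₁` to a vertex `w ≻ bₘ` contains, for each `i`, a vertex `zᵢ`
with `aᵢ ⪯ zᵢ ⪯ bᵢ`; in particular such a path has length at least `m + 1`. -/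
theorem path_meets_all_intervals {V : Type*} [Fintype V] [LinearOrder V]
    (G : SimpleGraph V)
    (hnonest : ∀ u v w x : V, G.Adj u v → G.Adj w x →
      ¬ (u < w ∧ w < x ∧ x < v))
    (m : ℕ) (hm : 0 < m) (a b : Fin m → V)
    (hadj : ∀ i : Fin m, G.Adj (a i) (b i))
    (hlt : ∀ i : Fin m, a i < b i)
    (hord : ∀ (i : ℕ) (h1 : i + 1 < m),
      b ⟨i, Nat.lt_of_succ_lt h1⟩ < a ⟨i + 1, h1⟩)
    (u w : V) (hu : u < a ⟨0, hm⟩) (hw : b ⟨m - 1, Nat.sub_lt hm Nat.one_pos⟩ < w)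
    (p : G.Walk u w) (hp : p.IsPath) :
    (∀ i : Fin m, ∃ z ∈ p.support, a i ≤ z ∧ z ≤ b i) ∧ m + 1 ≤ p.length := by
  -- separation between intervals
  have key : ∀ (j : ℕ) (hj : j < m) (i : ℕ) (hi : i < m), i < j →
      b ⟨i, hi⟩ < a ⟨j, hj⟩ := by
    intro j
    induction j with
    | zero => intro _ i _ h; omega
    | succ j ihj =>
      intro hj i hi hij
      rcases Nat.lt_or_ge i j with h | h
      · exact lt_trans (lt_trans (ihj (Nat.lt_of_succ_lt hj) i hi h)
          (hlt ⟨j, Nat.lt_of_succ_lt hj⟩)) (hord j hj)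
      · have : i = j := by omega
        subst this
        exact hord i hj
  have hsep : ∀ i j : Fin m, i < j → b i < a j := by
    intro i j hij
    have := key j.val j.isLt i.val i.isLt hij
    simpa using this
  have hA : ∀ i : Fin m, u < a i := by
    intro i
    rcases Nat.eq_zero_or_pos i.val with h | h
    · have : i = ⟨0, hm⟩ := by ext; simp [h]
      rw [this]; exact hu
    · exact lt_trans hu (lt_trans (hlt ⟨0, hm⟩) (hsep ⟨0, hm⟩ i (by simpa [Fin.lt_def])))
  have hB : ∀ i : Fin m, b i < w := by
    intro i
    rcases Nat.lt_or_ge i.val (m - 1) with h | h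
    · exact lt_trans (lt_trans (hsep i ⟨m - 1, Nat.sub_lt hm Nat.one_pos⟩
        (by simpa [Fin.lt_def])) (hlt _)) hw
    · have : i = ⟨m - 1, Nat.sub_lt hm Nat.one_pos⟩ := by
        ext; simp; omega
      rw [this]; exact hw
  have hmeets : ∀ i : Fin m, ∃ z ∈ p.support, a i ≤ z ∧ z ≤ b i := by
    intro i
    refine walk_cross (hlt i).le ?_ p (hA i) (hB i)
    intro x y hxy ⟨hx, hy⟩
    exact hnonest x y (a i) (b i) hxy (hadj i) ⟨hx, hlt i, hy⟩
  refine ⟨hmeets, ?_⟩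
  choose z hz hza hzb using hmeets
  -- the z i are distinct, and distinct from u and w
  have hzinj : Function.Injective z := by
    intro i j hij
    by_contra hne
    rcases lt_or_gt_of_ne hne with h | h
    · exact absurd (((hzb i).trans_lt (hsep i j h)).trans_le (hza j)) (by simp [hij])
    · exact absurd (((hzb j).trans_lt (hsep j i h)).trans_le (hza i)) (by simp [hij])
  have huz : ∀ i, z i ≠ u := fun i h => absurd ((hA i).trans_le (hza i)) (by simp [h])
  have hwz : ∀ i, z i ≠ w := fun i h => absurd ((hzb i).trans_lt (hB i)) (by simp [h])
  have huw : u ≠ w := by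
    have := (hu.trans ((hlt ⟨0, hm⟩).trans (hB ⟨0, hm⟩)))
    exact ne_of_lt this
  classical
  set s : Finset V := insert u (insert w (Finset.image z Finset.univ)) with hs
  have hcard : s.card = m + 2 := by
    rw [hs, Finset.card_insert_of_notMem, Finset.card_insert_of_notMem,
      Finset.card_image_of_injective _ hzinj]
    · simp
    · simp only [Finset.mem_image]
      rintro ⟨i, -, hi⟩
      exact hwz i hi
    · simp only [Finset.mem_insert, Finset.mem_image]
      rintro (h | ⟨i, -, hi⟩)
      · exact huw h
      · exact huz i hi
  have hsub : s ⊆ p.support.toFinset := by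
    intro x hx
    simp only [hs, Finset.mem_insert, Finset.mem_image] at hx
    rw [List.mem_toFinset]
    rcases hx with h | h | ⟨i, -, hi⟩
    · subst h; exact p.start_mem_support
    · subst h; exact p.end_mem_support
    · subst hi; exact hz i
  have hlen : p.support.toFinset.card = p.length + 1 := by
    rw [List.toFinset_card_of_nodup hp.support_nodup, SimpleGraph.Walk.length_support]
  have := Finset.card_le_card hsub
  omega
end

section
/- Let G=(V,E) be a finite simple graph and let ≺ be a linear order on V such that no two independent edges of G nest. Let H_1 and H_2 be vertex-disjoint subgraphs of G with H_1 connected, and let η be a graph isomorphism from H_1 to H_2 that preserves the order ≺ (i.e., for all vertices v, w of H_1, v ≺ w if and only if η(v) ≺ η(w)). If some vertex v of H_1 satisfies v ≺ η(v), then every vertex w of H_1 satisfies w ≺ η(w). -/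
/-- Let `≺` be a linear order on the vertices of `G` in which no two edges nest
(a 1-queue layout). Let `H₁, H₂` be vertex-disjoint subgraphs of `G` with `H₁`
connected, and let `η : H₁ ≃g H₂` be a graph isomorphism preserving `≺`. If some
vertex `v` of `H₁` satisfies `v ≺ η v`, then every vertex `w` of `H₁` satisfies
`w ≺ η w`. -/
theorem iso_copy_consistent_side {V : Type*} [Fintype V] [LinearOrder V]
    (G : SimpleGraph V)
    (hnonest : ∀ u v w x : V, G.Adj u v → G.Adj w x →
      ¬ (u < w ∧ w < x ∧ x < v))
    (H₁ H₂ : G.Subgraph) (hdisj : Disjoint H₁.verts H₂.verts)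
    (hconn : H₁.coe.Connected)
    (η : H₁.coe ≃g H₂.coe)
    (hord : ∀ v w : H₁.verts, (v : V) < (w : V) ↔ ((η v : V) < (η w : V)))
    (v : H₁.verts) (hv : (v : V) < (η v : V)) :
    ∀ w : H₁.verts, (w : V) < (η w : V) := by
  have key : ∀ a b : H₁.verts, H₁.coe.Adj a b → (a : V) < (η a : V) →
      (b : V) < (η b : V) := by
    intro a b hab ha
    have hGab : G.Adj (a : V) (b : V) := H₁.adj_sub (by simpa using hab)
    have hab' : H₂.coe.Adj (η a) (η b) := η.map_adj_iff.mpr hab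
    have hGab' : G.Adj ((η a : H₂.verts) : V) ((η b : H₂.verts) : V) :=
      H₂.adj_sub (by simpa using hab')
    have hne : (b : V) ≠ ((η b : H₂.verts) : V) := by
      intro h
      exact (Set.disjoint_left.mp hdisj b.2) (h ▸ (η b).2)
    rcases lt_or_gt_of_ne hne with h | h
    · exact h
    · exfalso
      have habne : (a : V) ≠ (b : V) := fun h' =>
        hab.ne (Subtype.ext h')
      rcases lt_or_gt_of_ne habne with h1 | h1
      · exact hnonest _ _ _ _ hGab hGab' ⟨ha, (hord a b).mp h1, h⟩
      · exact hnonest _ _ _ _ hGab'.symm hGab.symm ⟨h, h1, ha⟩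
  suffices h : ∀ a b : H₁.verts, H₁.coe.Reachable a b → (a : V) < (η a : V) →
      (b : V) < (η b : V) by
    intro w
    exact h v w (hconn v w) hv
  intro a b hr
  obtain ⟨p⟩ := hr
  induction p with
  | nil => exact id
  | cons hadj p ih => intro ha; exact ih (key _ _ hadj ha)
end

section
/- Let G=(V,E) be a finite simple graph, let ≺ be a linear order on V, and let h ≥ 1. There exists a queue assignment σ: E → {1,…,h} such that ⟨≺,σ⟩ is an h-queue layout of G if and only if ≺ contains no (h+1)-rainbow, i.e., there do not exist h+1 edges of G, pairwise having distinct endpoints, that pairwise nest with respect to ≺. -/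
/-- A chain of `n+1` pairwise nesting edges of `G`, with outermost edge `(a, b)`.
Index `0` is the innermost edge and index `n` the outermost. -/
def QChain {V : Type*} (G : SimpleGraph V) (f : V → ℕ) (n : ℕ) (a b : V) : Prop :=
  ∃ u v : ℕ → V,
    (∀ i, i ≤ n → G.Adj (u i) (v i)) ∧
    (∀ i j, i < j → j ≤ n → f (u j) < f (u i) ∧ f (v i) < f (v j)) ∧
    (∀ i, i ≤ n → f (u i) < f (v i)) ∧
    u n = a ∧ v n = b

theorem qchain_zero {V : Type*} {G : SimpleGraph V} {f : V → ℕ} {a b : V}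
    (hadj : G.Adj a b) (hab : f a < f b) : QChain G f 0 a b := by
  exact ⟨fun _ => a, fun _ => b, fun _ _ => hadj, fun i j hij hj => by omega,
    fun _ _ => hab, rfl, rfl⟩

theorem qchain_extend {V : Type*} {G : SimpleGraph V} {f : V → ℕ} {n : ℕ} {a b c d : V}
    (hc : QChain G f n a b) (hadj : G.Adj c d) (hca : f c < f a) (hbd : f b < f d) :
    QChain G f (n + 1) c d := by
  obtain ⟨u, v, h1, h2, h3, h4, h5⟩ := hc
  have hab : f a < f b := by rw [← h4, ← h5]; exact h3 n le_rfl
  have hub : ∀ i, i ≤ n → f a ≤ f (u i) ∧ f (v i) ≤ f b := by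
    intro i hi
    rcases eq_or_lt_of_le hi with rfl | hlt
    · simp [h4, h5]
    · have h' := h2 i n hlt le_rfl
      rw [h4, h5] at h'
      exact ⟨le_of_lt h'.1, le_of_lt h'.2⟩
  refine ⟨fun i => if i = n + 1 then c else u i, fun i => if i = n + 1 then d else v i,
    ?_, ?_, ?_, by simp, by simp⟩
  · intro i hi
    by_cases hin : i = n + 1
    · simpa [hin] using hadj
    · have : i ≤ n := by omega
      simpa [hin] using h1 i this
  · intro i j hij hj
    by_cases hjn : j = n + 1
    · have hin : i ≠ n + 1 := by omega
      have hi : i ≤ n := by omega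
      simp only [hjn, if_pos rfl, if_neg hin]
      exact ⟨lt_of_lt_of_le hca (hub i hi).1, lt_of_le_of_lt (hub i hi).2 hbd⟩
    · have hin : i ≠ n + 1 := by omega
      simp only [if_neg hjn, if_neg hin]
      exact h2 i j hij (by omega)
  · intro i hi
    by_cases hin : i = n + 1
    · simp only [hin, if_pos rfl]
      exact lt_trans hca (lt_trans hab hbd)
    · have : i ≤ n := by omega
      simpa [hin] using h3 i this

theorem qchain_rainbow {V : Type*} {G : SimpleGraph V} {f : V → ℕ} {h : ℕ} {a b : V}
    (hc : QChain G f h a b) :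
    ∃ u v : Fin (h + 1) → V,
      (∀ i : Fin (h + 1), G.Adj (u i) (v i)) ∧
      (∀ i j : Fin (h + 1), i < j → f (u i) < f (u j) ∧ f (v j) < f (v i)) ∧
      (∀ i : Fin (h + 1), f (u i) < f (v i)) := by
  obtain ⟨u, v, h1, h2, h3, -, -⟩ := hc
  refine ⟨fun i => u (h - (i : ℕ)), fun i => v (h - (i : ℕ)),
    fun i => h1 _ (by omega), ?_, fun i => h3 _ (by omega)⟩
  intro i j hij
  have hij' : (i : ℕ) < (j : ℕ) := hij
  have hj : (j : ℕ) ≤ h := by omega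
  exact h2 (h - (j : ℕ)) (h - (i : ℕ)) (by omega) (by omega)

open Classical in
/-- Greatest length (minus one) of a nesting chain of edges of `G` with outermost
edge `(a, b)`, capped at `h - 1`. -/
noncomputable def qN {V : Type*} (G : SimpleGraph V) (f : V → ℕ) (h : ℕ) (a b : V) : ℕ :=
  Nat.findGreatest (fun n => QChain G f n a b) (h - 1)

theorem qN_le {V : Type*} (G : SimpleGraph V) (f : V → ℕ) (h : ℕ) (a b : V) :
    qN G f h a b ≤ h - 1 := by
  classical
  unfold qN
  exact Nat.findGreatest_le _

theorem qN_spec {V : Type*} {G : SimpleGraph V} {f : V → ℕ} (h : ℕ) {a b : V}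
    (hadj : G.Adj a b) (hab : f a < f b) : QChain G f (qN G f h a b) a b := by
  classical
  unfold qN
  exact Nat.findGreatest_spec (P := fun n => QChain G f n a b) (Nat.zero_le _) (qchain_zero hadj hab)

theorem le_qN {V : Type*} {G : SimpleGraph V} {f : V → ℕ} {h m : ℕ} {a b : V}
    (hm : m ≤ h - 1) (hc : QChain G f m a b) : m ≤ qN G f h a b := by
  classical
  unfold qN
  exact Nat.le_findGreatest hm hc

/-- Given a fixed linear order of the vertices of `G` (an injection `f` into `ℕ`)
and `h ≥ 1`, there is a queue assignment `σ : E → {1,…,h}` making it an `h`-queue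
layout iff the order contains no `(h+1)`-rainbow, i.e. there are no `h+1` pairwise
nesting edges `u₁v₁, …, u_{h+1}v_{h+1}` with
`u₁ ≺ … ≺ u_{h+1} ≺ v_{h+1} ≺ … ≺ v₁`. -/
theorem queue_assignment_iff_no_rainbow {V : Type*} [Fintype V]
    (G : SimpleGraph V) (h : ℕ) (hh : 1 ≤ h)
    (f : V → ℕ) (hf : Function.Injective f) :
    (∃ σ : Sym2 V → Fin h,
      ∀ u v w x : V, G.Adj u v → G.Adj w x → σ s(u, v) = σ s(w, x) →
        ¬ (f u < f w ∧ f w < f x ∧ f x < f v)) ↔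
    ¬ ∃ u v : Fin (h + 1) → V,
        (∀ i : Fin (h + 1), G.Adj (u i) (v i)) ∧
        (∀ i j : Fin (h + 1), i < j → f (u i) < f (u j) ∧ f (v j) < f (v i)) ∧
        (∀ i : Fin (h + 1), f (u i) < f (v i)) := by
  classical
  constructor
  · rintro ⟨σ, hσ⟩ ⟨u, v, hadj, hnest, huv⟩
    obtain ⟨i, j, hij, heq⟩ := Fintype.exists_ne_map_eq_of_card_lt
      (fun i : Fin (h + 1) => σ s(u i, v i)) (by simp)
    rcases hij.lt_or_gt with hlt | hlt
    · exact hσ (u i) (v i) (u j) (v j) (hadj i) (hadj j) heq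
        ⟨(hnest i j hlt).1, huv j, (hnest i j hlt).2⟩
    · exact hσ (u j) (v j) (u i) (v i) (hadj j) (hadj i) heq.symm
        ⟨(hnest j i hlt).1, huv i, (hnest j i hlt).2⟩
  · intro hnr
    have hnP : ∀ a b : V, ¬ QChain G f h a b := fun a b hc => hnr (qchain_rainbow hc)
    have hsymm : ∀ a b : V,
        (if f a < f b then qN G f h a b else qN G f h b a) =
        (if f b < f a then qN G f h b a else qN G f h a b) := by
      intro a b
      rcases lt_trichotomy (f a) (f b) with hlt | heq | hgt
      · rw [if_pos hlt, if_neg (by omega)]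
      · have : a = b := hf heq
        subst this; rfl
      · rw [if_neg (by omega), if_pos hgt]
    refine ⟨fun e => ⟨Sym2.lift ⟨fun a b => if f a < f b then qN G f h a b else qN G f h b a,
      hsymm⟩ e, ?_⟩, ?_⟩
    · induction e using Sym2.ind with
      | _ a b =>
        simp only [Sym2.lift_mk]
        split
        · exact lt_of_le_of_lt (qN_le G f h a b) (by omega)
        · exact lt_of_le_of_lt (qN_le G f h b a) (by omega)
    · rintro a b c d hab hcd heq ⟨h1, h2, h3⟩
      have hfa : f a < f b := by omega
      have hval : qN G f h a b = qN G f h c d := by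
        have := congrArg Fin.val heq
        simpa [Sym2.lift_mk, if_pos hfa, if_pos h2] using this
      have hPcd : QChain G f (qN G f h c d) c d := qN_spec h hcd h2
      have hext : QChain G f (qN G f h c d + 1) a b := qchain_extend hPcd hab h1 h3
      rcases le_or_gt (qN G f h c d + 1) (h - 1) with hle | hgt
      · have hle2 : qN G f h c d + 1 ≤ qN G f h a b := le_qN hle hext
        omega
      · have hne : qN G f h c d = h - 1 := by have := qN_le G f h c d; omega
        have hch : QChain G f h a b := by
          rw [show h = qN G f h c d + 1 by omega]; exact hext
        exact hnP a b hch
end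

section
/- For every k ∈ ℕ there exists N ∈ ℕ (depending only on k) such that every finite simple graph G of treedepth at most k contains an induced subgraph G' with at most N vertices satisfying: G admits a 1-queue layout if and only if G' admits a 1-queue layout. -/
/-!
Graphs of treedepth at most `k` are well-quasi-ordered by induced subgraphs. A treedepth
decomposition is encoded as a forest of height at most `k` in which each vertex is labelled by
its adjacency to its ancestors; by Higman's lemma, applied once per level, such forests are
well-quasi-ordered under label-preserving embedding, and since the subtrees of distinct siblings
are non-adjacent, an embedding of codes yields an induced embedding of the graphs.

Having a 1-queue layout is inherited by induced subgraphs, so the minimal graphs of treedepth at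
most `k` without one form an antichain, hence are finitely many, and `N` bounds their size.
Formally, if no `N` works, a sequence of counterexamples, the `t`-th chosen for an `N` exceeding
the sizes of all earlier ones, contradicts the well-quasi-order.
-/

/-- `G` admits a 1-queue layout: a linear order of the vertices (given by an
injection `f` into `ℕ`) in which no two edges nest. -/
def HasOneQueueLayout {V : Type*} (G : SimpleGraph V) : Prop :=
  ∃ f : V → ℕ, Function.Injective f ∧
    ∀ u v w x : V, G.Adj u v → G.Adj w x →
      ¬ (f u < f w ∧ f w < f x ∧ f x < f v)

/-- A rooted forest on the vertex set `V`, given by a parent function and a depth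
function: roots (the fixed points of `par`) have depth 1, and every non-root
vertex is one level deeper than its parent. -/
structure TDForest (V : Type*) where
  par : V → V
  depth : V → ℕ
  depth_root : ∀ v : V, par v = v → depth v = 1
  depth_par : ∀ v : V, par v ≠ v → depth v = depth (par v) + 1

/-- `u` is an ancestor of `v` (including `u = v`) in the rooted forest `F`. -/
def TDForest.Anc {V : Type*} (F : TDForest V) (u v : V) : Prop :=
  ∃ n : ℕ, F.par^[n] v = u

/-- `F` is a treedepth decomposition of `G`: the endpoints of every edge of `G`
are in ancestor-descendant relation in `F`. -/
def IsTDForestDecomp {V : Type*} (G : SimpleGraph V) (F : TDForest V) : Prop :=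
  ∀ u v : V, G.Adj u v → F.Anc u v ∨ F.Anc v u

theorem List.SublistForall₂.of_cons {α β : Type*} {R : α → β → Prop} {a : α} {l₁ : List α} :
    ∀ {l₂ : List β}, SublistForall₂ R (a :: l₁) l₂ → SublistForall₂ R l₁ l₂
  | _ :: _, .cons _ h => .cons_right h
  | _ :: _, .cons_right h => .cons_right h.of_cons

/-- A node stands for a vertex, numbered in `ℕ`, and its label records the adjacency of that
vertex to its ancestors, nearest first (see `CodeTree.Encodes`). `CodeTree.Embeds` ignores the
vertex numbers, which only serve to read off the induced embedding. -/
inductive CodeTree : Type where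
  | node (vertex : ℕ) (label : List Bool) (children : List CodeTree)

namespace CodeTree

def label : CodeTree → List Bool
  | node _ l _ => l

def children : CodeTree → List CodeTree
  | node _ _ c => c

def vertex : CodeTree → ℕ
  | node v _ _ => v

theorem eta (t : CodeTree) : t = node t.vertex t.label t.children := by cases t; rfl

inductive Embeds : CodeTree → CodeTree → Prop
  | node {v v' : ℕ} {l : List Bool} {c c' : List CodeTree} :
      List.SublistForall₂ Embeds c c' → Embeds (node v l c) (node v' l c')

theorem Embeds.refl (t : CodeTree) : Embeds t t := by
  induction t using CodeTree.rec (motive_2 := fun cs => List.SublistForall₂ Embeds cs cs) with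
  | node _ _ _ h => exact .node h
  | nil => exact .nil
  | cons _ _ h hs => exact .cons h hs

theorem Embeds.trans {t₁ t₂ t₃ : CodeTree} (h₁₂ : Embeds t₁ t₂) (h₂₃ : Embeds t₂ t₃) :
    Embeds t₁ t₃ := by
  refine Embeds.rec (motive_1 := fun t₁ t₂ _ => ∀ t₃, Embeds t₂ t₃ → Embeds t₁ t₃)
    (motive_2 := fun l₁ l₂ _ => ∀ l₃, List.SublistForall₂ Embeds l₂ l₃ →
      List.SublistForall₂ Embeds l₁ l₃) ?_ ?_ ?_ ?_ h₁₂ t₃ h₂₃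
  · rintro v v' l c c' - ih _ ⟨h⟩
    exact .node (ih _ h)
  · intro l _ _
    exact .nil
  · rintro a₁ a₂ l₁ l₂ - - iha ihl l₃ h
    induction l₃ with
    | nil => cases h
    | cons b l₃ ih =>
      cases h with
      | cons hab hl => exact .cons (iha b hab) (ihl l₃ hl)
      | cons_right h => exact .cons_right (ih h)
  · rintro a l₁ l₂ - ih l₃ h
    exact ih l₃ h.of_cons

instance : IsPreorder CodeTree Embeds where
  refl := Embeds.refl
  trans _ _ _ := Embeds.trans

def Bounded : ℕ → ℕ → CodeTree → Prop
  | 0, _, _ => False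
  | h + 1, d, t => t.label.length = d ∧ ∀ x ∈ t.children, Bounded h (d + 1) x

theorem partiallyWellOrderedOn_bounded :
    ∀ h d : ℕ, {t | Bounded h d t}.PartiallyWellOrderedOn Embeds
  | 0, _ => fun f => (f 0).2.elim
  | h + 1, d => by
    have hprod := ((List.finite_length_eq Bool d).partiallyWellOrderedOn (r := Eq)).prod
      ((partiallyWellOrderedOn_bounded h (d + 1)).partiallyWellOrderedOn_sublistForall₂ Embeds)
    refine Set.partiallyWellOrderedOn_iff_exists_lt.2 fun f hf => ?_
    obtain ⟨m, n, hmn, hlabel, hchildren⟩ :=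
      hprod.exists_lt (f := fun n => ((f n).label, (f n).children)) fun n => hf n
    dsimp only at hlabel hchildren
    refine ⟨m, n, hmn, ?_⟩
    rw [eta (f m), eta (f n), hlabel]
    exact .node hchildren

def verts : CodeTree → List ℕ
  | node v _ c => v :: (c.map verts).flatten

def forestVerts (cs : List CodeTree) : List ℕ := (cs.map verts).flatten

theorem verts_node (v : ℕ) (l : List Bool) (c : List CodeTree) :
    verts (node v l c) = v :: forestVerts c := by
  rw [verts, forestVerts]

@[simp]
theorem forestVerts_nil : forestVerts [] = [] := rfl

@[simp]
theorem forestVerts_cons (t : CodeTree) (cs : List CodeTree) :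
    forestVerts (t :: cs) = verts t ++ forestVerts cs := by
  simp [forestVerts]

theorem mem_forestVerts {a : ℕ} {cs : List CodeTree} :
    a ∈ forestVerts cs ↔ ∃ t ∈ cs, a ∈ verts t := by
  simp [forestVerts]

variable (A B : SimpleGraph ℕ)

open Classical in
noncomputable def adjLabel (v : ℕ) (anc : List ℕ) : List Bool :=
  anc.map fun a => decide (A.Adj v a)

theorem adjLabel_cons_eq_iff {v w a b : ℕ} {anc anc' : List ℕ} :
    adjLabel A v (a :: anc) = adjLabel B w (b :: anc') ↔
      (A.Adj v a ↔ B.Adj w b) ∧ adjLabel A v anc = adjLabel B w anc' := by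
  simp [adjLabel]

def Separated (t t' : CodeTree) : Prop :=
  ∀ a ∈ t.verts, ∀ b ∈ t'.verts, ¬ A.Adj a b

def Encodes : List ℕ → CodeTree → Prop
  | anc, node v l c => l = adjLabel A v anc ∧ (∀ t ∈ c, Encodes (v :: anc) t) ∧
      c.Pairwise (Separated A)

def EncodesForest (anc : List ℕ) (cs : List CodeTree) : Prop :=
  (∀ t ∈ cs, Encodes A anc t) ∧ cs.Pairwise (Separated A)

variable {A B}

theorem encodes_node {anc : List ℕ} {v : ℕ} {l : List Bool} {c : List CodeTree} :
    Encodes A anc (node v l c) ↔ l = adjLabel A v anc ∧ EncodesForest A (v :: anc) c := by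
  rw [Encodes, EncodesForest]

theorem encodesForest_cons {anc : List ℕ} {t : CodeTree} {cs : List CodeTree} :
    EncodesForest A anc (t :: cs) ↔
      Encodes A anc t ∧ (∀ t' ∈ cs, Separated A t t') ∧ EncodesForest A anc cs := by
  simp only [EncodesForest, List.forall_mem_cons, List.pairwise_cons]
  tauto

theorem encodesForest_singleton {anc : List ℕ} {t : CodeTree} :
    EncodesForest A anc [t] ↔ Encodes A anc t := by
  simp [EncodesForest]

variable (A B)

def Transfers (cs cs' : List CodeTree) : Prop :=
  ∀ anc anc', EncodesForest A anc cs → EncodesForest B anc' cs' →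
    ∃ L : List (ℕ × ℕ), L.map Prod.fst = forestVerts cs ∧
      (L.map Prod.snd).Sublist (forestVerts cs') ∧
      (∀ p ∈ L, ∀ q ∈ L, A.Adj p.1 q.1 ↔ B.Adj p.2 q.2) ∧
      ∀ p ∈ L, adjLabel A p.1 anc = adjLabel B p.2 anc'

variable {A B}

theorem Transfers.nil (cs' : List CodeTree) : Transfers A B [] cs' :=
  fun _ _ _ _ => ⟨[], rfl, List.nil_sublist _, by simp, by simp⟩

theorem Transfers.cons_right {cs cs' : List CodeTree} (t' : CodeTree) (h : Transfers A B cs cs') :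
    Transfers A B cs (t' :: cs') := by
  intro anc anc' hE hE'
  obtain ⟨L, hfst, hsnd, hadj, hlabel⟩ := h anc anc' hE (encodesForest_cons.1 hE').2.2
  exact ⟨L, hfst, hsnd.trans (by simp), hadj, hlabel⟩

theorem not_adj_of_forall_separated {t : CodeTree} {cs : List CodeTree}
    (h : ∀ t' ∈ cs, Separated A t t') {a b : ℕ} (ha : a ∈ verts t) (hb : b ∈ forestVerts cs) :
    ¬ A.Adj a b := by
  obtain ⟨t', ht', hb⟩ := mem_forestVerts.1 hb
  exact h t' ht' a ha b hb

theorem Transfers.cons {t t' : CodeTree} {cs cs' : List CodeTree}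
    (h₁ : Transfers A B [t] [t']) (h₂ : Transfers A B cs cs') :
    Transfers A B (t :: cs) (t' :: cs') := by
  intro anc anc' hE hE'
  obtain ⟨hEt, hsep, hEcs⟩ := encodesForest_cons.1 hE
  obtain ⟨hEt', hsep', hEcs'⟩ := encodesForest_cons.1 hE'
  obtain ⟨L₁, hfst₁, hsnd₁, hadj₁, hlabel₁⟩ :=
    h₁ anc anc' (encodesForest_singleton.2 hEt) (encodesForest_singleton.2 hEt')
  obtain ⟨L₂, hfst₂, hsnd₂, hadj₂, hlabel₂⟩ := h₂ anc anc' hEcs hEcs'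
  simp only [forestVerts_cons, forestVerts_nil, List.append_nil] at hfst₁ hsnd₁
  have hcross : ∀ p ∈ L₁, ∀ q ∈ L₂, ¬ A.Adj p.1 q.1 ∧ ¬ B.Adj p.2 q.2 := fun p hp q hq =>
    ⟨not_adj_of_forall_separated hsep (hfst₁ ▸ List.mem_map_of_mem hp)
      (hfst₂ ▸ List.mem_map_of_mem hq),
     not_adj_of_forall_separated hsep' (hsnd₁.subset (List.mem_map_of_mem hp))
      (hsnd₂.subset (List.mem_map_of_mem hq))⟩
  refine ⟨L₁ ++ L₂, by simp [hfst₁, hfst₂], by simpa using hsnd₁.append hsnd₂, ?_, ?_⟩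
  · intro p hp q hq
    rcases List.mem_append.1 hp with hp | hp <;> rcases List.mem_append.1 hq with hq | hq
    · exact hadj₁ p hp q hq
    · exact iff_of_false (hcross p hp q hq).1 (hcross p hp q hq).2
    · exact iff_of_false (fun h => (hcross q hq p hp).1 h.symm)
        (fun h => (hcross q hq p hp).2 h.symm)
    · exact hadj₂ p hp q hq
  · simpa only [List.forall_mem_append] using ⟨hlabel₁, hlabel₂⟩

theorem Transfers.node {v v' : ℕ} {l : List Bool} {c c' : List CodeTree}
    (h : Transfers A B c c') : Transfers A B [node v l c] [node v' l c'] := by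
  intro anc anc' hE hE'
  obtain ⟨hl, hEc⟩ := encodes_node.1 (encodesForest_singleton.1 hE)
  obtain ⟨hl', hEc'⟩ := encodes_node.1 (encodesForest_singleton.1 hE')
  obtain ⟨L, hfst, hsnd, hadj, hlabel⟩ := h (v :: anc) (v' :: anc') hEc hEc'
  have hlabel' := fun p hp => (adjLabel_cons_eq_iff A B).1 (hlabel p hp)
  refine ⟨(v, v') :: L, by simp [verts_node, hfst], by simpa [verts_node] using hsnd.cons_cons v',
    ?_, ?_⟩
  · intro p hp q hq
    rcases List.mem_cons.1 hp with rfl | hp <;> rcases List.mem_cons.1 hq with rfl | hq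
    · exact iff_of_false (A.irrefl) (B.irrefl)
    · simpa only [A.adj_comm v, B.adj_comm v'] using (hlabel' q hq).1
    · exact (hlabel' p hp).1
    · exact hadj p hp q hq
  · rintro p (_ | ⟨_, hp⟩)
    · exact hl ▸ hl'
    · exact (hlabel' p hp).2

theorem transfers_of_sublistForall₂ {cs cs' : List CodeTree}
    (h : List.SublistForall₂ Embeds cs cs') : Transfers A B cs cs' :=
  Embeds.rec_1 (motive_1 := fun t t' _ => Transfers A B [t] [t'])
    (motive_2 := fun cs cs' _ => Transfers A B cs cs')
    (fun _ ih => ih.node) (Transfers.nil _) (fun _ _ ih ihs => ih.cons ihs)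
    (fun _ ih => ih.cons_right _) h

end CodeTree

namespace TDForest

variable {V : Type*} (F : TDForest V)

theorem depth_pos (v : V) : 1 ≤ F.depth v := by
  by_cases h : F.par v = v
  · rw [F.depth_root v h]
  · rw [F.depth_par v h]
    omega

theorem depth_par_le (v : V) : F.depth (F.par v) ≤ F.depth v := by
  by_cases h : F.par v = v
  · rw [h]
  · rw [F.depth_par v h]
    omega

theorem depth_iterate_le (n : ℕ) (v : V) : F.depth (F.par^[n] v) ≤ F.depth v := by
  induction n with
  | zero => rfl
  | succ n ih =>
    rw [Function.iterate_succ_apply']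
    exact (F.depth_par_le _).trans ih

variable {F}

theorem Anc.refl (v : V) : F.Anc v v := ⟨0, rfl⟩

theorem Anc.trans {u v w : V} (huv : F.Anc u v) (hvw : F.Anc v w) : F.Anc u w := by
  obtain ⟨m, rfl⟩ := huv
  obtain ⟨n, rfl⟩ := hvw
  exact ⟨m + n, Function.iterate_add_apply _ _ _ _⟩

theorem Anc.of_par_eq {u v c : V} (h : F.Anc c u) (hc : F.par c = v) : F.Anc v u :=
  Anc.trans ⟨1, hc⟩ h

theorem Anc.depth_le {u v : V} (h : F.Anc u v) : F.depth u ≤ F.depth v := by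
  obtain ⟨n, rfl⟩ := h
  exact F.depth_iterate_le n v

theorem Anc.eq_of_depth_eq {u v : V} (h : F.Anc u v) (hd : F.depth u = F.depth v) : u = v := by
  obtain ⟨n, rfl⟩ := h
  induction n generalizing v with
  | zero => rfl
  | succ n ih =>
    rw [Function.iterate_succ_apply] at hd ⊢
    by_cases hr : F.par v = v
    · rw [hr] at hd ⊢
      exact ih hd
    · have := F.depth_iterate_le n (F.par v)
      have := F.depth_par v hr
      omega

theorem Anc.anc_or_anc {u x w : V} (hu : F.Anc u w) (hx : F.Anc x w) : F.Anc u x ∨ F.Anc x u := by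
  obtain ⟨a, rfl⟩ := hu
  obtain ⟨b, rfl⟩ := hx
  rcases le_total a b with hab | hab
  · obtain ⟨m, rfl⟩ := Nat.exists_eq_add_of_le hab
    exact .inr ⟨m, by rw [← Function.iterate_add_apply, add_comm]⟩
  · obtain ⟨m, rfl⟩ := Nat.exists_eq_add_of_le hab
    exact .inl ⟨m, by rw [← Function.iterate_add_apply, add_comm]⟩

theorem not_anc_of_depth_eq {c c' u w : V} (hd : F.depth c = F.depth c') (hne : c ≠ c')
    (hu : F.Anc c u) (hw : F.Anc c' w) : ¬ F.Anc u w := by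
  intro huw
  rcases (hu.trans huw).anc_or_anc hw with h | h
  · exact hne (h.eq_of_depth_eq hd)
  · exact hne (h.eq_of_depth_eq hd.symm).symm

variable (F)

theorem isFixedPt_par_iterate_depth_sub_one (u : V) :
    Function.IsFixedPt F.par (F.par^[F.depth u - 1] u) := by
  obtain ⟨n, hn⟩ : ∃ n, F.depth u = n + 1 := ⟨F.depth u - 1, by have := F.depth_pos u; omega⟩
  rw [hn, Nat.add_sub_cancel]
  induction n generalizing u with
  | zero =>
    by_contra h
    have := F.depth_par u h
    have := F.depth_pos (F.par u)
    omega
  | succ n ih =>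
    have hr : F.par u ≠ u := fun h => by
      rw [F.depth_root u h] at hn
      omega
    rw [Function.iterate_succ_apply]
    exact ih _ (by rw [F.depth_par u hr] at hn; omega)

open Classical in
noncomputable def childList [Fintype V] (v : V) : List V :=
  (Finset.univ.filter fun u => F.par u = v ∧ u ≠ v).toList

open Classical in
noncomputable def rootList [Fintype V] : List V :=
  (Finset.univ.filter fun r => F.par r = r).toList

variable [Fintype V]

theorem mem_childList {u v : V} : u ∈ F.childList v ↔ F.par u = v ∧ u ≠ v := by
  simp [childList]

theorem mem_rootList {r : V} : r ∈ F.rootList ↔ F.par r = r := by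
  simp [rootList]

theorem nodup_childList (v : V) : (F.childList v).Nodup := Finset.nodup_toList _

theorem nodup_rootList : F.rootList.Nodup := Finset.nodup_toList _

theorem depth_of_mem_childList {u v : V} (h : u ∈ F.childList v) : F.depth u = F.depth v + 1 := by
  obtain ⟨hp, hne⟩ := F.mem_childList.1 h
  rw [F.depth_par u (fun h => hne (h.symm.trans hp)), hp]

theorem depth_of_mem_rootList {r : V} (h : r ∈ F.rootList) : F.depth r = 1 :=
  F.depth_root r (F.mem_rootList.1 h)

end TDForest

namespace TDForest

open CodeTree

variable {V : Type*} [Fintype V] (F : TDForest V) (G : SimpleGraph V) (ι : V ↪ ℕ)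

/-- `anc` lists the numbers of the ancestors of `v`, nearest first. The fuel `h` cuts the tree
off below height `h`, which loses nothing once `h` is at least the height of `F`. -/
noncomputable def codeTree : ℕ → List ℕ → V → CodeTree
  | 0, anc, v => .node (ι v) (adjLabel (G.map ι) (ι v) anc) []
  | h + 1, anc, v => .node (ι v) (adjLabel (G.map ι) (ι v) anc)
      ((F.childList v).map (codeTree h (ι v :: anc)))

noncomputable def code (k : ℕ) : List CodeTree :=
  F.rootList.map (F.codeTree G ι k [])

variable {F G ι}

theorem exists_anc_of_mem_verts_codeTree {h : ℕ} {anc : List ℕ} {v : V} {m : ℕ}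
    (hm : m ∈ (F.codeTree G ι h anc v).verts) : ∃ u, F.Anc v u ∧ ι u = m := by
  induction h generalizing anc v with
  | zero =>
    simp only [codeTree, verts_node, forestVerts_nil, List.mem_singleton] at hm
    exact ⟨v, .refl v, hm.symm⟩
  | succ h ih =>
    rw [codeTree, verts_node, List.mem_cons, mem_forestVerts] at hm
    rcases hm with rfl | ⟨t, ht, hm⟩
    · exact ⟨v, .refl v, rfl⟩
    · obtain ⟨c, hc, rfl⟩ := List.mem_map.1 ht
      obtain ⟨u, hu, rfl⟩ := ih hm
      exact ⟨u, hu.of_par_eq (F.mem_childList.1 hc).1, rfl⟩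

theorem separated_codeTree (hdec : IsTDForestDecomp G F) {c c' : V}
    (hd : F.depth c = F.depth c') (hne : c ≠ c') (h h' : ℕ) (anc anc' : List ℕ) :
    Separated (G.map ι) (F.codeTree G ι h anc c) (F.codeTree G ι h' anc' c') := by
  intro a ha b hb hab
  obtain ⟨u, hu, rfl⟩ := exists_anc_of_mem_verts_codeTree ha
  obtain ⟨w, hw, rfl⟩ := exists_anc_of_mem_verts_codeTree hb
  rcases hdec u w (SimpleGraph.map_adj_apply.1 hab) with huw | hwu
  · exact not_anc_of_depth_eq hd hne hu hw huw
  · exact not_anc_of_depth_eq hd.symm hne.symm hw hu hwu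

theorem disjoint_verts_codeTree {c c' : V} (hd : F.depth c = F.depth c') (hne : c ≠ c')
    (h h' : ℕ) (anc anc' : List ℕ) :
    (F.codeTree G ι h anc c).verts.Disjoint (F.codeTree G ι h' anc' c').verts := by
  intro a ha ha'
  obtain ⟨u, hu, rfl⟩ := exists_anc_of_mem_verts_codeTree ha
  obtain ⟨w, hw, hwu⟩ := exists_anc_of_mem_verts_codeTree ha'
  rw [ι.injective hwu] at hw
  exact not_anc_of_depth_eq hd hne hu hw (.refl u)

theorem pairwise_separated_map_codeTree (hdec : IsTDForestDecomp G F) {xs : List V} {d : ℕ}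
    (hxs : xs.Nodup) (hd : ∀ x ∈ xs, F.depth x = d) (h : ℕ) (anc : List ℕ) :
    (xs.map (F.codeTree G ι h anc)).Pairwise (Separated (G.map ι)) :=
  List.pairwise_map.2 <| hxs.imp_of_mem fun hx hy hne =>
    separated_codeTree hdec ((hd _ hx).trans (hd _ hy).symm) hne h h anc anc

theorem nodup_forestVerts_map_codeTree {xs : List V} {d h : ℕ} {anc : List ℕ} (hxs : xs.Nodup)
    (hd : ∀ x ∈ xs, F.depth x = d) (hnodup : ∀ x ∈ xs, (F.codeTree G ι h anc x).verts.Nodup) :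
    (forestVerts (xs.map (F.codeTree G ι h anc))).Nodup := by
  rw [forestVerts, List.nodup_flatten, List.map_map, List.pairwise_map]
  exact ⟨by simpa using hnodup, hxs.imp_of_mem fun hx hy hne =>
    disjoint_verts_codeTree ((hd _ hx).trans (hd _ hy).symm) hne h h anc anc⟩

theorem encodes_codeTree (hdec : IsTDForestDecomp G F) (h : ℕ) (anc : List ℕ) (v : V) :
    Encodes (G.map ι) anc (F.codeTree G ι h anc v) := by
  induction h generalizing anc v with
  | zero => exact encodes_node.2 ⟨rfl, by simp [EncodesForest]⟩
  | succ h ih =>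
    refine encodes_node.2 ⟨rfl, fun t ht => ?_, pairwise_separated_map_codeTree hdec
      (F.nodup_childList v) (fun _ => F.depth_of_mem_childList) h _⟩
    obtain ⟨c, -, rfl⟩ := List.mem_map.1 ht
    exact ih _ c

theorem bounded_codeTree (h : ℕ) (anc : List ℕ) (v : V) :
    Bounded (h + 1) anc.length (F.codeTree G ι h anc v) := by
  induction h generalizing anc v with
  | zero => simp [Bounded, codeTree, label, children, adjLabel]
  | succ h ih =>
    refine ⟨by simp [codeTree, label, adjLabel], fun t ht => ?_⟩
    obtain ⟨c, -, rfl⟩ := List.mem_map.1 ht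
    exact ih _ c

theorem nodup_verts_codeTree (h : ℕ) (anc : List ℕ) (v : V) :
    (F.codeTree G ι h anc v).verts.Nodup := by
  induction h generalizing anc v with
  | zero => simp [codeTree, verts_node]
  | succ h ih =>
    rw [codeTree, verts_node, List.nodup_cons, mem_forestVerts]
    refine ⟨fun ⟨t, ht, hv⟩ => ?_, nodup_forestVerts_map_codeTree (F.nodup_childList v)
      (fun _ => F.depth_of_mem_childList) fun c _ => ih _ c⟩
    obtain ⟨c, hc, rfl⟩ := List.mem_map.1 ht
    obtain ⟨u, hcu, hu⟩ := exists_anc_of_mem_verts_codeTree hv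
    rw [ι.injective hu] at hcu
    have := hcu.depth_le
    have := F.depth_of_mem_childList hc
    omega

theorem mem_verts_codeTree_self (h : ℕ) (anc : List ℕ) (v : V) :
    ι v ∈ (F.codeTree G ι h anc v).verts := by
  cases h <;> simp [codeTree, verts_node]

theorem mem_verts_codeTree {n h : ℕ} {u v : V} (huv : F.par^[n] u = v) (hn : n ≤ h)
    (anc : List ℕ) : ι u ∈ (F.codeTree G ι h anc v).verts := by
  induction n generalizing v h anc with
  | zero =>
    subst huv
    exact mem_verts_codeTree_self h anc u
  | succ n ih =>
    rw [Function.iterate_succ_apply'] at huv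
    by_cases hw : F.par^[n] u = v
    · exact ih hw (by omega) anc
    obtain ⟨h, rfl⟩ : ∃ h', h = h' + 1 := ⟨h - 1, by omega⟩
    rw [codeTree, verts_node]
    have hc : F.par^[n] u ∈ F.childList v := F.mem_childList.2 ⟨huv, hw⟩
    exact List.mem_cons_of_mem _
      (mem_forestVerts.2 ⟨_, List.mem_map_of_mem hc, ih rfl (by omega) _⟩)

variable (G ι)

theorem encodesForest_code (hdec : IsTDForestDecomp G F) (k : ℕ) :
    EncodesForest (G.map ι) [] (F.code G ι k) := by
  refine ⟨fun t ht => ?_, pairwise_separated_map_codeTree hdec F.nodup_rootList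
    (fun _ => F.depth_of_mem_rootList) k []⟩
  obtain ⟨r, -, rfl⟩ := List.mem_map.1 ht
  exact encodes_codeTree hdec k [] r

theorem bounded_code (k : ℕ) : ∀ t ∈ F.code G ι k, Bounded (k + 1) 0 t := by
  intro t ht
  obtain ⟨r, -, rfl⟩ := List.mem_map.1 ht
  exact bounded_codeTree k [] r

theorem nodup_forestVerts_code (k : ℕ) : (forestVerts (F.code G ι k)).Nodup :=
  nodup_forestVerts_map_codeTree F.nodup_rootList (fun _ => F.depth_of_mem_rootList)
    fun r _ => nodup_verts_codeTree k [] r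

theorem mem_forestVerts_code {k : ℕ} (hdep : ∀ v, F.depth v ≤ k) (u : V) :
    ι u ∈ forestVerts (F.code G ι k) := by
  have hroot : F.par^[F.depth u - 1] u ∈ F.rootList :=
    F.mem_rootList.2 (F.isFixedPt_par_iterate_depth_sub_one u)
  exact mem_forestVerts.2 ⟨_, List.mem_map_of_mem hroot,
    mem_verts_codeTree rfl (by have := hdep u; omega) []⟩

theorem exists_eq_of_mem_forestVerts_code {k m : ℕ} (hm : m ∈ forestVerts (F.code G ι k)) :
    ∃ u, ι u = m := by
  obtain ⟨t, ht, hm⟩ := mem_forestVerts.1 hm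
  obtain ⟨r, -, rfl⟩ := List.mem_map.1 ht
  obtain ⟨u, -, hu⟩ := exists_anc_of_mem_verts_codeTree hm
  exact ⟨u, hu⟩

end TDForest

theorem SimpleGraph.nonempty_embedding_of_pairing {V W : Type*} {G : SimpleGraph V}
    {H : SimpleGraph W} {ι : V ↪ ℕ} {κ : W ↪ ℕ} (L : List (ℕ × ℕ))
    (hfst : ∀ v, ∃ p ∈ L, p.1 = ι v) (hsnd : ∀ p ∈ L, ∃ w, κ w = p.2)
    (hnodup : (L.map Prod.snd).Nodup)
    (hadj : ∀ p ∈ L, ∀ q ∈ L, (G.map ι).Adj p.1 q.1 ↔ (H.map κ).Adj p.2 q.2) :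
    Nonempty (G ↪g H) := by
  choose p hpL hp using hfst
  choose φ hφ using fun v => hsnd (p v) (hpL v)
  refine ⟨⟨⟨φ, fun u v huv => ι.injective ?_⟩, fun {u v} => ?_⟩⟩
  · have : p u = p v := List.inj_on_of_nodup_map hnodup (hpL u) (hpL v) (by rw [← hφ, ← hφ, huv])
    rw [← hp, ← hp, this]
  · change H.Adj (φ u) (φ v) ↔ G.Adj u v
    rw [← SimpleGraph.map_adj_apply (f := κ), ← SimpleGraph.map_adj_apply (f := ι), hφ, hφ, ← hp,
      ← hp, hadj _ (hpL u) _ (hpL v)]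

/-- Graphs of bounded treedepth are well-quasi-ordered by induced subgraph embedding. -/
theorem exists_lt_nonempty_embedding_of_treedepth_le {k : ℕ} {V : ℕ → Type*} [∀ i, Fintype (V i)]
    (G : ∀ i, SimpleGraph (V i))
    (hG : ∀ i, ∃ F : TDForest (V i), IsTDForestDecomp (G i) F ∧ ∀ v, F.depth v ≤ k) :
    ∃ i j, i < j ∧ Nonempty (G i ↪g G j) := by
  choose F hdec hdep using hG
  let ι i : V i ↪ ℕ := (Fintype.equivFin (V i)).toEmbedding.trans Fin.valEmbedding
  obtain ⟨i, j, hij, hemb⟩ :=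
    ((CodeTree.partiallyWellOrderedOn_bounded (k + 1) 0).partiallyWellOrderedOn_sublistForall₂
      CodeTree.Embeds).exists_lt fun i => (F i).bounded_code (G i) (ι i) k
  obtain ⟨L, hfst, hsnd, hadj, -⟩ := CodeTree.transfers_of_sublistForall₂ hemb [] []
    ((F i).encodesForest_code (G i) (ι i) (hdec i) k)
    ((F j).encodesForest_code (G j) (ι j) (hdec j) k)
  refine ⟨i, j, hij, SimpleGraph.nonempty_embedding_of_pairing L (fun v => ?_) (fun p hp => ?_)
    (((F j).nodup_forestVerts_code (G j) (ι j) k).sublist hsnd) hadj⟩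
  · exact List.mem_map.1 (hfst ▸ (F i).mem_forestVerts_code (G i) (ι i) (hdep i) v)
  · exact (F j).exists_eq_of_mem_forestVerts_code (G j) (ι j) (hsnd.subset (List.mem_map_of_mem hp))

theorem HasOneQueueLayout.of_embedding {V W : Type*} {G : SimpleGraph V} {H : SimpleGraph W}
    (f : G ↪g H) (h : HasOneQueueLayout H) : HasOneQueueLayout G := by
  obtain ⟨pos, hpos, hnest⟩ := h
  exact ⟨pos ∘ f, hpos.comp f.injective, fun u v w x huv hwx =>
    hnest _ _ _ _ (f.map_adj_iff.2 huv) (f.map_adj_iff.2 hwx)⟩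

theorem HasOneQueueLayout.of_isEmpty {V : Type*} [IsEmpty V] (G : SimpleGraph V) :
    HasOneQueueLayout G :=
  ⟨fun _ => 0, fun a => isEmptyElim a, fun u => isEmptyElim u⟩

/-- Kernelization for 1-queue layouts parameterized by treedepth: for every `k`
there is an `N` (depending only on `k`) such that every finite graph of treedepth
at most `k` has an induced subgraph on at most `N` vertices that admits a 1-queue
layout iff the whole graph does. -/
theorem one_queue_kernel_treedepth (k : ℕ) :
    ∃ N : ℕ, ∀ (V : Type) [Fintype V] (G : SimpleGraph V),
      (∃ F : TDForest V, IsTDForestDecomp G F ∧ ∀ v : V, F.depth v ≤ k) →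
      ∃ S : Set V, S.ncard ≤ N ∧
        (HasOneQueueLayout G ↔ HasOneQueueLayout (G.induce S)) := by
  by_contra hbad
  simp only [not_exists, not_forall, not_and] at hbad
  choose V _ G hG hS using hbad
  have no_layout N : ¬ HasOneQueueLayout (G N) := fun h =>
    hS N ∅ (by simp) (iff_of_true h (.of_isEmpty _))
  have small_layout N (S : Set (V N)) (hSN : S.ncard ≤ N) : HasOneQueueLayout ((G N).induce S) :=
    by_contra fun h => hS N S hSN (iff_of_false (no_layout N) h)
  -- `n (s + 1)` bounds the size of the `s`-th graph, so its image in any later one is small.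
  let n : ℕ → ℕ := fun t => Nat.rec 0 (fun _ m => m + Fintype.card (V m)) t
  obtain ⟨s, t, hst, ⟨f⟩⟩ :=
    exists_lt_nonempty_embedding_of_treedepth_le (fun t => G (n t)) fun t => hG (n t)
  have hcard : (Set.range f).ncard ≤ n t := calc
    (Set.range f).ncard ≤ Fintype.card (V (n s)) := by
      rw [← Nat.card_eq_fintype_card, ← Set.ncard_univ, ← Set.image_univ]
      exact Set.ncard_image_le (Set.toFinite _)
    _ ≤ n (s + 1) := Nat.le_add_left _ _
    _ ≤ n t := monotone_nat_of_le_succ (fun _ => Nat.le_add_right _ _) hst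
  exact no_layout _ ((small_layout _ _ hcard).of_embedding f.isoInduceRange.toEmbedding)
end

section
/- Let G=(V,E) be a finite simple graph with a vertex cover C of size τ and let h ≥ 1. For each U ⊆ C let V_U = {x ∈ V∖C : N(x)=U}. Let G* be any induced subgraph of G obtained by keeping all vertices of C and, for each U ⊆ C, keeping min(|V_U|, 2·h^τ + 1) vertices of V_U and deleting the rest. Then G admits an h-queue layout if and only if G* admits an h-queue layout; moreover G* has at most τ + 2^τ·(2·h^τ + 1) vertices. -/
lemma median_lemma {V : Type*} [DecidableEq V] (T : Finset V) (k : V → ℕ)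
    (h3 : 2 < T.card) (hinj : Set.InjOn k T) :
    ∃ a m b, a ∈ T ∧ m ∈ T ∧ b ∈ T ∧ k a < k m ∧ k m < k b := by
  classical
  have hci : 2 < (T.image k).card := by
    rwa [Finset.card_image_of_injOn hinj]
  have hne : (T.image k).Nonempty := Finset.card_pos.mp (by omega)
  set I := T.image k with hI
  have hlo := I.min'_mem hne
  have hhi := I.max'_mem hne
  have hJ : (((I.erase (I.min' hne)).erase (I.max' hne))).Nonempty := by
    rw [← Finset.card_pos]
    have h1 := Finset.pred_card_le_card_erase (a := I.max' hne) (s := I.erase (I.min' hne))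
    have h2 := Finset.pred_card_le_card_erase (a := I.min' hne) (s := I)
    omega
  obtain ⟨mid, hmid⟩ := hJ
  have hmid1 : mid ≠ I.max' hne := Finset.ne_of_mem_erase hmid
  have hmid' := Finset.mem_of_mem_erase hmid
  have hmid2 : mid ≠ I.min' hne := Finset.ne_of_mem_erase hmid'
  have hmidI : mid ∈ I := Finset.mem_of_mem_erase hmid'
  have hlt1 : I.min' hne < mid := lt_of_le_of_ne (I.min'_le _ hmidI) (Ne.symm hmid2)
  have hlt2 : mid < I.max' hne := lt_of_le_of_ne (I.le_max' _ hmidI) hmid1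
  obtain ⟨a, ha, hka⟩ := Finset.mem_image.mp hlo
  obtain ⟨m, hm, hkm⟩ := Finset.mem_image.mp hmidI
  obtain ⟨b, hb, hkb⟩ := Finset.mem_image.mp hhi
  exact ⟨a, m, b, ha, hm, hb, by omega, by omega⟩

/-- Kernel for \textsc{Queue Number} parameterized by vertex cover: let `C` be a
vertex cover of size `τ` and `h ≥ 1`. Let `W` be a set of vertices containing all
of `C` and, for each type `U ⊆ C`, exactly `min(|V_U|, 2·h^τ + 1)` vertices of
type `U` (where `V_U` is the set of vertices outside `C` whose neighborhood is
exactly `U`). Then `G` admits an `h`-queue layout iff the induced subgraph `G[W]`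
does, and `|W| ≤ τ + 2^τ·(2·h^τ + 1)`. -/
theorem queue_kernel_vertexCover {V : Type*} [Fintype V] [DecidableEq V]
    (G : SimpleGraph V) [DecidableRel G.Adj]
    (C : Finset V) (τ h : ℕ)
    (hcover : ∀ u v : V, G.Adj u v → u ∈ C ∨ v ∈ C)
    (hτ : C.card = τ) (hh : 1 ≤ h)
    (W : Finset V) (hCW : C ⊆ W)
    (hW : ∀ U ⊆ C,
      (W.filter (fun x : V => x ∉ C ∧ G.neighborFinset x = U)).card =
        min (Finset.univ.filter (fun x : V => x ∉ C ∧ G.neighborFinset x = U)).card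
          (2 * h ^ τ + 1)) :
    (HasQueueLayout G h ↔ HasQueueLayout (G.induce (↑W : Set V)) h) ∧
      W.card ≤ τ + 2 ^ τ * (2 * h ^ τ + 1) := by
  classical
  constructor
  · constructor
    · rintro ⟨f, σ, hinj, hnn⟩
      refine ⟨fun v => f ↑v, fun e => σ (Sym2.map Subtype.val e),
        hinj.comp Subtype.val_injective, ?_⟩
      intro u v w x h1 h2 hs
      have h1' : G.Adj ↑u ↑v := h1
      have h2' : G.Adj ↑w ↑x := h2
      have hs' : σ s((u : V), (v : V)) = σ s((w : V), (x : V)) := by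
        simpa using hs
      exact hnn _ _ _ _ h1' h2' hs'
    · rintro ⟨f₀, σ₀, hinj₀, hnn₀⟩
      set n := Fintype.card V with hn
      obtain ⟨key, hkey⟩ : ∃ k : V → ℕ, ∀ (v : V) (hv : v ∈ W),
          k v = f₀ ⟨v, Finset.mem_coe.mpr hv⟩ :=
        ⟨fun v => if hv : v ∈ W then f₀ ⟨v, Finset.mem_coe.mpr hv⟩ else 0,
          fun v hv => dif_pos hv⟩
      obtain ⟨σW, hσW⟩ : ∃ s : V → V → Fin h, ∀ (p q : V) (hp : p ∈ W) (hq : q ∈ W),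
          s p q = σ₀ s(⟨p, Finset.mem_coe.mpr hp⟩, ⟨q, Finset.mem_coe.mpr hq⟩) :=
        ⟨fun p q => if hp : p ∈ W then if hq : q ∈ W then
            σ₀ s(⟨p, Finset.mem_coe.mpr hp⟩, ⟨q, Finset.mem_coe.mpr hq⟩)
          else ⟨0, hh⟩ else ⟨0, hh⟩,
         fun p q hp hq => by simp only [dif_pos hp, dif_pos hq]⟩
      have σWsymm : ∀ p q, p ∈ W → q ∈ W → σW p q = σW q p := by
        intro p q hp hq
        rw [hσW p q hp hq, hσW q p hq hp, Sym2.eq_swap]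
      have keyinjW : ∀ p q, p ∈ W → q ∈ W → key p = key q → p = q := by
        intro p q hp hq hpq
        rw [hkey p hp, hkey q hq] at hpq
        exact congrArg Subtype.val (hinj₀ hpq)
      have adjNC : ∀ p, p ∉ C → ∀ q, G.Adj p q → q ∈ C := by
        intro p hp q hq
        rcases hcover p q hq with h' | h'
        · exact absurd h' hp
        · exact h'
      have hdel : ∀ d : V, d ∉ W →
          (W.filter (fun x => x ∉ C ∧ G.neighborFinset x = G.neighborFinset d)).card
            = 2 * h ^ τ + 1 := by
        intro d hd
        have hdC : d ∉ C := fun hc => hd (hCW hc)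
        have hsub : G.neighborFinset d ⊆ C := by
          intro c hc
          rw [SimpleGraph.mem_neighborFinset] at hc
          exact adjNC d hdC c hc
        have hWU := hW _ hsub
        have hss : W.filter (fun x => x ∉ C ∧ G.neighborFinset x = G.neighborFinset d)
            ⊂ Finset.univ.filter (fun x => x ∉ C ∧ G.neighborFinset x = G.neighborFinset d) := by
          rw [Finset.ssubset_iff_of_subset (Finset.filter_subset_filter _ (Finset.subset_univ W))]
          exact ⟨d, Finset.mem_filter.mpr ⟨Finset.mem_univ d, hdC, rfl⟩,
            fun hmem => hd (Finset.mem_filter.mp hmem).1⟩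
        have hlt := Finset.card_lt_card hss
        rcases min_cases (Finset.univ.filter
            (fun x : V => x ∉ C ∧ G.neighborFinset x = G.neighborFinset d)).card
            (2 * h ^ τ + 1) with ⟨he, _⟩ | ⟨he, _⟩ <;> omega
      have H : ∀ d : V, ∃ a mm b : V, d ∉ W →
          (a ∈ W ∧ a ∉ C ∧ G.neighborFinset a = G.neighborFinset d) ∧
          (mm ∈ W ∧ mm ∉ C ∧ G.neighborFinset mm = G.neighborFinset d) ∧
          (b ∈ W ∧ b ∉ C ∧ G.neighborFinset b = G.neighborFinset d) ∧
          (∀ c ∈ C, σW a c = σW mm c) ∧ (∀ c ∈ C, σW b c = σW mm c) ∧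
          key a < key mm ∧ key mm < key b := by
        intro d
        by_cases hd : d ∈ W
        · exact ⟨d, d, d, fun hdn => absurd hd hdn⟩
        · set S := W.filter (fun x => x ∉ C ∧ G.neighborFinset x = G.neighborFinset d) with hS
          have hcard : S.card = 2 * h ^ τ + 1 := hdel d hd
          set sg : V → (↥C → Fin h) := fun v c => σW v ↑c with hsg
          have hmaps : ∀ x ∈ S, sg x ∈ (Finset.univ : Finset (↥C → Fin h)) :=
            fun x _ => Finset.mem_univ _
          have hcardt : (Finset.univ : Finset (↥C → Fin h)).card * 2 < S.card := by
            rw [Finset.card_univ, Fintype.card_fun, Fintype.card_coe, hτ, Fintype.card_fin, hcard]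
            omega
          obtain ⟨φ, _, hφ⟩ := Finset.exists_lt_card_fiber_of_mul_lt_card_of_maps_to hmaps hcardt
          set T := S.filter (fun x => sg x = φ) with hT
          have hTW : ∀ x ∈ T, x ∈ W := fun x hx =>
            (Finset.mem_filter.mp ((Finset.mem_filter.mp hx).1)).1
          have hTinj : Set.InjOn key T := fun p hp q hq hpq =>
            keyinjW p q (hTW p hp) (hTW q hq) hpq
          obtain ⟨a, mm, b, ha, hm, hb, hab1, hab2⟩ := median_lemma T key hφ hTinj
          have hprop : ∀ x ∈ T, x ∈ W ∧ x ∉ C ∧ G.neighborFinset x = G.neighborFinset d := by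
            intro x hx
            have hx' := Finset.mem_filter.mp ((Finset.mem_filter.mp hx).1)
            exact ⟨hx'.1, hx'.2⟩
          have hsig : ∀ x ∈ T, ∀ y ∈ T, ∀ c ∈ C, σW x c = σW y c := by
            intro x hx y hy c hc
            have hx2 := (Finset.mem_filter.mp hx).2
            have hy2 := (Finset.mem_filter.mp hy).2
            exact congrFun (hx2.trans hy2.symm) ⟨c, hc⟩
          exact ⟨a, mm, b, fun _ => ⟨hprop a ha, hprop mm hm, hprop b hb,
            fun c hc => hsig a ha mm hm c hc, fun c hc => hsig b hb mm hm c hc, hab1, hab2⟩⟩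
      choose aF mF bF hF using H
      obtain ⟨rep, hrepW, hrepD⟩ : ∃ r : V → V, (∀ v ∈ W, r v = v) ∧ (∀ v ∉ W, r v = mF v) :=
        ⟨fun v => if v ∈ W then v else mF v, fun v hv => if_pos hv, fun v hv => if_neg hv⟩
      have repW : ∀ v, rep v ∈ W := by
        intro v
        by_cases hv : v ∈ W
        · rw [hrepW v hv]; exact hv
        · rw [hrepD v hv]; exact ((hF v hv).2.1).1
      have repNB : ∀ v, G.neighborFinset (rep v) = G.neighborFinset v := by
        intro v
        by_cases hv : v ∈ W
        · rw [hrepW v hv]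
        · rw [hrepD v hv]; exact ((hF v hv).2.1).2.2
      have repNC : ∀ v, v ∉ W → rep v ∉ C := by
        intro v hv
        rw [hrepD v hv]; exact ((hF v hv).2.1).2.1
      obtain ⟨f, hfW, hfD⟩ : ∃ f : V → ℕ, (∀ v ∈ W, f v = (n + 1) * key v) ∧
          (∀ v ∉ W, f v = (n + 1) * key (mF v) + (1 + (Fintype.equivFin V v).val)) :=
        ⟨fun v => if v ∈ W then (n + 1) * key v
            else (n + 1) * key (mF v) + (1 + (Fintype.equivFin V v).val),
         fun v hv => if_pos hv, fun v hv => if_neg hv⟩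
      have hoffB : ∀ v : V, 1 + (Fintype.equivFin V v).val < n + 1 := by
        intro v
        have := (Fintype.equivFin V v).isLt
        omega
      have flow : ∀ v, (n + 1) * key (rep v) ≤ f v ∧ f v < (n + 1) * key (rep v) + (n + 1) := by
        intro v
        by_cases hv : v ∈ W
        · rw [hfW v hv, hrepW v hv]; omega
        · rw [hfD v hv, hrepD v hv]
          have := hoffB v
          omega
      have L1 : ∀ u w, f u < f w → key (rep u) ≤ key (rep w) := by
        intro u w hlt
        by_contra hcon
        push_neg at hcon
        have h1 := (flow u).1
        have h2 := (flow w).2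
        have h3 : (n + 1) * (key (rep w) + 1) ≤ (n + 1) * key (rep u) :=
          Nat.mul_le_mul_left _ hcon
        have e1 : (n + 1) * key (rep w) + (n + 1) = (n + 1) * (key (rep w) + 1) := by ring
        omega
      have L1s : ∀ u w, u ∈ W → w ∈ W → f u < f w → key u < key w := by
        intro u w hu hw hlt
        rw [hfW u hu, hfW w hw] at hlt
        exact Nat.lt_of_mul_lt_mul_left hlt
      have hNpos : 0 < n + 1 := Nat.succ_pos n
      have finj : Function.Injective f := by
        intro p q hpq
        by_cases hp : p ∈ W <;> by_cases hq : q ∈ W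
        · rw [hfW p hp, hfW q hq] at hpq
          exact keyinjW p q hp hq (Nat.eq_of_mul_eq_mul_left hNpos hpq)
        · rw [hfW p hp, hfD q hq] at hpq
          have hm := congrArg (· % (n + 1)) hpq
          simp only [Nat.mul_mod_right, Nat.mul_add_mod] at hm
          rw [Nat.mod_eq_of_lt (hoffB q)] at hm
          exact absurd hm (by omega)
        · rw [hfD p hp, hfW q hq] at hpq
          have hm := congrArg (· % (n + 1)) hpq
          simp only [Nat.mul_mod_right, Nat.mul_add_mod] at hm
          rw [Nat.mod_eq_of_lt (hoffB p)] at hm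
          exact absurd hm (by omega)
        · rw [hfD p hp, hfD q hq] at hpq
          have hm := congrArg (· % (n + 1)) hpq
          simp only [Nat.mul_add_mod] at hm
          rw [Nat.mod_eq_of_lt (hoffB p), Nat.mod_eq_of_lt (hoffB q)] at hm
          have : (Fintype.equivFin V p) = (Fintype.equivFin V q) := Fin.ext (by omega)
          exact (Fintype.equivFin V).injective this
      have hsymmAll : ∀ p q : V, σW (rep p) (rep q) = σW (rep q) (rep p) :=
        fun p q => σWsymm _ _ (repW p) (repW q)
      refine ⟨f, Sym2.lift ⟨fun p q => σW (rep p) (rep q), hsymmAll⟩, finj, ?_⟩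
      intro u v w x hadj1 hadj2 hσe
      rintro ⟨l1, l2, l3⟩
      have hσe' : σW (rep u) (rep v) = σW (rep w) (rep x) := hσe
      have repAdj : ∀ p q, G.Adj p q → G.Adj (rep p) (rep q) := by
        intro p q hpq
        by_cases hp : p ∈ W <;> by_cases hq : q ∈ W
        · rwa [hrepW p hp, hrepW q hq]
        · have hqC : q ∉ C := fun hc => hq (hCW hc)
          have hpC : p ∈ C := by
            rcases hcover p q hpq with h' | h'
            · exact h'
            · exact absurd h' hqC
          rw [hrepW p hp]
          have hmem : p ∈ G.neighborFinset (rep q) := by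
            rw [repNB q, SimpleGraph.mem_neighborFinset]
            exact hpq.symm
          rw [SimpleGraph.mem_neighborFinset] at hmem
          exact hmem.symm
        · have hpC : p ∉ C := fun hc => hp (hCW hc)
          have hqC : q ∈ C := adjNC p hpC q hpq
          rw [hrepW q hq]
          have hmem : q ∈ G.neighborFinset (rep p) := by
            rw [repNB p, SimpleGraph.mem_neighborFinset]
            exact hpq
          rw [SimpleGraph.mem_neighborFinset] at hmem
          exact hmem
        · have hpC : p ∉ C := fun hc => hp (hCW hc)
          have hqC : q ∉ C := fun hc => hq (hCW hc)
          rcases hcover p q hpq with h' | h'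
          · exact absurd h' hpC
          · exact absurd h' hqC
      have Contra : ∀ p1 q1 p2 q2 : V, p1 ∈ W → q1 ∈ W → p2 ∈ W → q2 ∈ W →
          G.Adj p1 q1 → G.Adj p2 q2 → σW p1 q1 = σW p2 q2 →
          key p1 < key p2 → key p2 < key q2 → key q2 < key q1 → False := by
        intro p1 q1 p2 q2 h1 h2 h3 h4 a1 a2 hs k1 k2 k3
        refine hnn₀ ⟨p1, Finset.mem_coe.mpr h1⟩ ⟨q1, Finset.mem_coe.mpr h2⟩
          ⟨p2, Finset.mem_coe.mpr h3⟩ ⟨q2, Finset.mem_coe.mpr h4⟩ a1 a2 ?_ ⟨?_, ?_, ?_⟩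
        · rw [← hσW p1 q1 h1 h2, ← hσW p2 q2 h3 h4]
          exact hs
        · rw [hkey p1 h1, hkey p2 h3] at k1; exact k1
        · rw [hkey p2 h3, hkey q2 h4] at k2; exact k2
        · rw [hkey q2 h4, hkey q1 h2] at k3; exact k3
      have k1 : key (rep u) ≤ key (rep w) := L1 u w l1
      have k2 : key (rep w) ≤ key (rep x) := L1 w x l2
      have k3 : key (rep x) ≤ key (rep v) := L1 x v l3
      rcases eq_or_lt_of_le k3 with k3e | k3s
      · -- Case B: rep x = rep v
        have hrxv : rep x = rep v := keyinjW _ _ (repW x) (repW v) k3e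
        have hvW : v ∉ W := by
          intro hvW
          have h1 := (flow x).1
          rw [hrxv, hrepW v hvW, ← hfW v hvW] at h1
          omega
        have hrv : rep v = mF v := hrepD v hvW
        have hFv := hF v hvW
        have hMW : mF v ∈ W := hFv.2.1.1
        have hMC : mF v ∉ C := hFv.2.1.2.1
        have hNM : G.neighborFinset (mF v) = G.neighborFinset v := hFv.2.1.2.2
        have hNx : G.neighborFinset (mF v) = G.neighborFinset x := by
          rw [← hrv, ← hrxv]; exact repNB x
        have hvC : v ∉ C := fun hc => hvW (hCW hc)
        have huC : u ∈ C := adjNC v hvC u hadj1.symm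
        have hwC : w ∈ C := by
          have hwNx : w ∈ G.neighborFinset x := (G.mem_neighborFinset _ _).mpr hadj2.symm
          rw [← hNx] at hwNx
          exact adjNC (mF v) hMC w ((G.mem_neighborFinset _ _).mp hwNx)
        have huW : u ∈ W := hCW huC
        have hwW : w ∈ W := hCW hwC
        have hbW : bF v ∈ W := hFv.2.2.1.1
        have hNb : G.neighborFinset (bF v) = G.neighborFinset v := hFv.2.2.1.2.2
        have i1 : key u < key w := L1s u w huW hwW l1
        have i2 : key w < key (mF v) := by
          have k2' := k2
          rw [hrepW w hwW, hrxv, hrv] at k2'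
          have hne : w ≠ mF v := fun he => hMC (he ▸ hwC)
          exact lt_of_le_of_ne k2' (fun he => hne (keyinjW w (mF v) hwW hMW he))
        have i3 : key (mF v) < key (bF v) := hFv.2.2.2.2.2.2
        have eMw : G.Adj w (mF v) := by
          have hmem : w ∈ G.neighborFinset (mF v) := by
            rw [hNx]; exact (G.mem_neighborFinset _ _).mpr hadj2.symm
          exact ((G.mem_neighborFinset _ _).mp hmem).symm
        have eub : G.Adj u (bF v) := by
          have hmem : u ∈ G.neighborFinset (bF v) := by
            rw [hNb]; exact (G.mem_neighborFinset _ _).mpr hadj1.symm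
          exact ((G.mem_neighborFinset _ _).mp hmem).symm
        have s1 : σW u (bF v) = σW w (mF v) := by
          calc σW u (bF v) = σW (bF v) u := σWsymm u (bF v) huW hbW
            _ = σW (mF v) u := hFv.2.2.2.2.1 u huC
            _ = σW u (mF v) := σWsymm (mF v) u hMW huW
            _ = σW (rep u) (rep v) := by rw [hrepW u huW, hrv]
            _ = σW (rep w) (rep x) := hσe'
            _ = σW w (mF v) := by rw [hrepW w hwW, hrxv, hrv]
        exact Contra u (bF v) w (mF v) huW hbW hwW hMW eub eMw s1 i1 i2 i3
      rcases eq_or_lt_of_le k2 with k2e | k2s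
      · -- Case C: rep w = rep x, contradiction with cover
        have hrwx : rep w = rep x := keyinjW _ _ (repW w) (repW x) k2e
        have hwC : w ∉ C := by
          by_cases hw : w ∈ W
          · by_cases hx : x ∈ W
            · rw [hrepW w hw, hrepW x hx] at hrwx
              rw [hrwx] at l2
              exact absurd l2 (lt_irrefl _)
            · rw [hrepW w hw, hrepD x hx] at hrwx
              rw [hrwx]
              exact (hF x hx).2.1.2.1
          · exact fun hc => hw (hCW hc)
        have hxC : x ∉ C := by
          by_cases hx : x ∈ W
          · by_cases hw : w ∈ W
            · rw [hrepW w hw, hrepW x hx] at hrwx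
              rw [hrwx] at l2
              exact absurd l2 (lt_irrefl _)
            · rw [hrepD w hw, hrepW x hx] at hrwx
              rw [← hrwx]
              exact (hF w hw).2.1.2.1
          · exact fun hc => hx (hCW hc)
        rcases hcover w x hadj2 with h' | h'
        · exact absurd h' hwC
        · exact absurd h' hxC
      rcases eq_or_lt_of_le k1 with k1e | k1s
      · -- Case A: rep u = rep w
        have hruw : rep u = rep w := keyinjW _ _ (repW u) (repW w) k1e
        have hwW : w ∉ W := by
          intro hwW
          have h1 := (flow u).1
          rw [hruw, hrepW w hwW, ← hfW w hwW] at h1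
          omega
        have hrw : rep w = mF w := hrepD w hwW
        have hFw := hF w hwW
        have hmW : mF w ∈ W := hFw.2.1.1
        have hmC : mF w ∉ C := hFw.2.1.2.1
        have hNm : G.neighborFinset (mF w) = G.neighborFinset w := hFw.2.1.2.2
        have hNu : G.neighborFinset (mF w) = G.neighborFinset u := by
          rw [← hrw, ← hruw]; exact repNB u
        have hvC : v ∈ C := by
          have hmem : v ∈ G.neighborFinset u := (G.mem_neighborFinset _ _).mpr hadj1
          rw [← hNu] at hmem
          exact adjNC (mF w) hmC v ((G.mem_neighborFinset _ _).mp hmem)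
        have hxC : x ∈ C := by
          have hmem : x ∈ G.neighborFinset w := (G.mem_neighborFinset _ _).mpr hadj2
          rw [← hNm] at hmem
          exact adjNC (mF w) hmC x ((G.mem_neighborFinset _ _).mp hmem)
        have hvW : v ∈ W := hCW hvC
        have hxW : x ∈ W := hCW hxC
        have haW : aF w ∈ W := hFw.1.1
        have hNa : G.neighborFinset (aF w) = G.neighborFinset w := hFw.1.2.2
        have i1 : key (aF w) < key (mF w) := hFw.2.2.2.2.2.1
        have i2 : key (mF w) < key x := by
          have k2' := k2s
          rw [hrw, hrepW x hxW] at k2'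
          exact k2'
        have i3 : key x < key v := L1s x v hxW hvW l3
        have eav : G.Adj (aF w) v := by
          have hmem : v ∈ G.neighborFinset (aF w) := by
            rw [hNa, ← hNm, hNu]
            exact (G.mem_neighborFinset _ _).mpr hadj1
          exact (G.mem_neighborFinset _ _).mp hmem
        have emx : G.Adj (mF w) x := by
          have hmem : x ∈ G.neighborFinset (mF w) := by
            rw [hNm]
            exact (G.mem_neighborFinset _ _).mpr hadj2
          exact (G.mem_neighborFinset _ _).mp hmem
        have s1 : σW (aF w) v = σW (mF w) x := by
          calc σW (aF w) v = σW (mF w) v := hFw.2.2.2.1 v hvC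
            _ = σW (rep u) (rep v) := by rw [hruw, hrw, hrepW v hvW]
            _ = σW (rep w) (rep x) := hσe'
            _ = σW (mF w) x := by rw [hrw, hrepW x hxW]
        exact Contra (aF w) v (mF w) x haW hvW hmW hxW eav emx s1 i1 i2 i3
      · exact Contra (rep u) (rep v) (rep w) (rep x) (repW u) (repW v) (repW w) (repW x)
          (repAdj u v hadj1) (repAdj w x hadj2) hσe' k1s k2s k3s
  · -- cardinality bound
    have h1 : W.card ≤ C.card + (W.filter (fun x => x ∉ C)).card := by
      have hsub : W ⊆ C ∪ W.filter (fun x => x ∉ C) := by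
        intro x hx
        by_cases hxC : x ∈ C
        · exact Finset.mem_union_left _ hxC
        · exact Finset.mem_union_right _ (Finset.mem_filter.mpr ⟨hx, hxC⟩)
      calc W.card ≤ (C ∪ W.filter (fun x => x ∉ C)).card := Finset.card_le_card hsub
        _ ≤ C.card + (W.filter (fun x => x ∉ C)).card := Finset.card_union_le _ _
    have h2 : (W.filter (fun x => x ∉ C)).card ≤ (2 * h ^ τ + 1) * 2 ^ τ := by
      have hmain := Finset.card_le_mul_card_image_of_maps_to
        (f := fun x : V => G.neighborFinset x)
        (s := W.filter (fun x => x ∉ C)) (t := C.powerset) ?_ (2 * h ^ τ + 1) ?_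
      · rwa [Finset.card_powerset, hτ] at hmain
      · intro xx hxx
        have hm := Finset.mem_filter.mp hxx
        rw [Finset.mem_powerset]
        intro c hc
        rw [SimpleGraph.mem_neighborFinset] at hc
        rcases hcover xx c hc with h' | h'
        · exact absurd h' hm.2
        · exact h'
      · intro U hU
        rw [Finset.mem_powerset] at hU
        have hWU := hW U hU
        rw [Finset.filter_filter]
        rw [hWU]
        exact min_le_right _ _
    have h3 : (2 * h ^ τ + 1) * 2 ^ τ = 2 ^ τ * (2 * h ^ τ + 1) := Nat.mul_comm _ _
    omega
end
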